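/- arXiv:1907.13417 — 8 statements merged into one kernel-verified Lean document; each statement's English description precedes it below -/
import Mathlib

section
/- Let p be a prime and let m ≥ 0, n ≥ 1, d ≥ 0 be integers. Then the dimension of Q_{m,d}(n) over the field F_p is at least as large as the dimension of Q_{m,d}(n) over ℂ. -/
open MvPolynomial

/-- The space `Q_{m,d}(n)` of homogeneous `m`-quasi-invariant polynomials of degree `d`
in `n` variables over `k`, as a `k`-submodule of `k[x_1, …, x_n]`. -/
noncomputable def quasiInvariantSubmodule (k : Type*) [CommRing k] (n m d : ℕ) :
    Submodule k (MvPolynomial (Fin n) k) :=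
  (MvPolynomial.homogeneousSubmodule (Fin n) k d) ⊓
    ⨅ (i : Fin n) (j : Fin n) (_ : i < j),
      Submodule.comap
        ((LinearMap.id - (MvPolynomial.rename (Equiv.swap i j)).toLinearMap :
            MvPolynomial (Fin n) k →ₗ[k] MvPolynomial (Fin n) k))
        (Submodule.restrictScalars k
          (Ideal.span {(MvPolynomial.X i - MvPolynomial.X j) ^ (2 * m + 1)}))

section RankTools

open Module Submodule


section Ext

variable {F K : Type*} [Field F] [Field K] (φ : F →+* K)

lemma ext_linearIndependent {ι β : Type*} [Fintype ι] [Fintype β] [DecidableEq ι] [DecidableEq β]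
    {v : β → ι → F} (hv : LinearIndependent F v) :
    LinearIndependent K (fun a i => φ (v a i)) := by
  classical
  set V : Matrix ι β F := Matrix.of fun i a => v a i with hV
  have hinj : LinearMap.ker V.mulVecLin = ⊥ := by
    rw [LinearMap.ker_eq_bot']
    intro c hc
    rw [Fintype.linearIndependent_iff] at hv
    funext a
    refine hv c ?_ a
    funext i
    have := congrFun hc i
    simpa [Matrix.mulVecLin, Matrix.mulVec, dotProduct, hV, mul_comm] using this
  obtain ⟨g, hg⟩ := V.mulVecLin.exists_leftInverse_of_injective hinj
  set L : Matrix β ι F := LinearMap.toMatrix' g with hL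
  have hLV : L * V = 1 := by
    have := congrArg LinearMap.toMatrix' hg
    rwa [LinearMap.toMatrix'_comp, LinearMap.toMatrix'_id, ← Matrix.toLin'_apply',
      LinearMap.toMatrix'_toLin'] at this
  rw [Fintype.linearIndependent_iff]
  intro c hc
  have hc' : (V.map φ).mulVec c = 0 := by
    funext i
    have := congrFun hc i
    simpa [Matrix.mulVec, dotProduct, hV, mul_comm] using this
  have h1 : ((L * V).map φ) = (1 : Matrix β β K) := by
    rw [hLV]
    ext a b
    simp [Matrix.map_apply, Matrix.one_apply, apply_ite φ]
  have : c = 0 := by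
    calc c = (1 : Matrix β β K).mulVec c := by rw [Matrix.one_mulVec]
    _ = ((L.map φ) * (V.map φ)).mulVec c := by rw [← Matrix.map_mul, h1]
    _ = (L.map φ).mulVec ((V.map φ).mulVec c) := by rw [← Matrix.mulVec_mulVec]
    _ = 0 := by rw [hc', Matrix.mulVec_zero]
  exact fun i => congrFun this i

end Ext

section Master

variable {ι : Type*} [Fintype ι] [DecidableEq ι]

/-- Componentwise cast `ℤ → K` as a `ℤ`-linear map. -/
noncomputable def castPi (K : Type*) [Field K] (ι : Type*) :
    (ι → ℤ) →ₗ[ℤ] (ι → K) :=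
  ((Int.castRingHom K).toAddMonoidHom.toIntLinearMap).compLeft ι

lemma castPi_apply {K : Type*} [Field K] {ι : Type*} (v : ι → ℤ) (i : ι) :
    castPi K ι v i = (v i : K) := rfl

lemma span_map_le {K : Type*} [Field K] {ι : Type*} (S : Set (ι → ℤ)) {x : ι → ℤ}
    (hx : x ∈ Submodule.span ℤ S) :
    castPi K ι x ∈ Submodule.span K (castPi K ι '' S) := by
  induction hx using Submodule.span_induction with
  | mem y hy => exact Submodule.subset_span ⟨y, hy, rfl⟩
  | zero => simpa using (Submodule.span K _).zero_mem
  | add y z _ _ hy hz => simpa [map_add] using (Submodule.span K _).add_mem hy hz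
  | smul a y _ hy =>
      rw [map_smul]
      exact (Submodule.span K _).smul_of_tower_mem a hy

end Master

section Master2

open Matrix

lemma rank_le_rank_complex (p : ℕ) [Fact p.Prime] {ι κ : Type*} [Fintype ι] [Fintype κ]
    [DecidableEq ι] [DecidableEq κ] (M : Matrix ι κ ℤ) :
    (M.map (Int.cast : ℤ → ZMod p)).rank ≤ (M.map (Int.cast : ℤ → ℂ)).rank := by
  classical
  -- the lattice spanned by the columns of M
  set Λ : Submodule ℤ (ι → ℤ) := Submodule.span ℤ (Set.range Mᵀ) with hΛ
  haveI : Module.Finite ℤ Λ := by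
    apply Module.Finite.span_of_finite
    exact Set.finite_range _
  haveI : Module.Free ℤ Λ := Module.free_of_finite_type_torsion_free'
  set β := Module.Free.ChooseBasisIndex ℤ Λ with hβ
  set b : Basis β ℤ Λ := Module.Free.chooseBasis ℤ Λ with hb
  -- Λ is the ℤ-span of the (coerced) basis vectors
  have hspan : Λ = Submodule.span ℤ (Set.range fun a => (b a : ι → ℤ)) := by
    have h1 : Submodule.span ℤ (Set.range b) = (⊤ : Submodule ℤ Λ) := b.span_eq
    have h2 := congrArg (Submodule.map Λ.subtype) h1
    rw [Submodule.map_span, ← Set.range_comp, Submodule.map_subtype_top] at h2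
    simpa [Function.comp_def] using h2.symm
  -- columns of M.map cast are casts of columns of M
  have hcols : ∀ (K : Type) [Field K], Set.range (M.map (Int.cast : ℤ → K))ᵀ
      = castPi K ι '' Set.range Mᵀ := by
    intro K _
    ext x
    constructor
    · rintro ⟨j, rfl⟩; exact ⟨Mᵀ j, ⟨j, rfl⟩, rfl⟩
    · rintro ⟨y, ⟨j, rfl⟩, rfl⟩; exact ⟨j, rfl⟩
  -- generic upper bound : rank over any field K is at most card β
  have hle : ∀ (K : Type) [Field K], (M.map (Int.cast : ℤ → K)).rank ≤ Fintype.card β := by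
    intro K _
    rw [Matrix.rank_eq_finrank_span_cols, show Set.range (M.map (Int.cast : ℤ → K)).col
      = Set.range (M.map (Int.cast : ℤ → K))ᵀ from rfl, hcols K]
    have hsub : Submodule.span K (castPi K ι '' Set.range Mᵀ) ≤
        Submodule.span K (Set.range fun a => castPi K ι (b a : ι → ℤ)) := by
      rw [Submodule.span_le]
      rintro x ⟨y, hy, rfl⟩
      have hyΛ : y ∈ Λ := Submodule.subset_span hy
      rw [hspan] at hyΛ
      have := span_map_le (K := K) _ hyΛ
      rwa [← Set.range_comp] at this
    refine le_trans (Submodule.finrank_mono hsub) ?_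
    refine le_trans (finrank_span_le_card _) ?_
    rw [Set.toFinset_range]
    exact Finset.card_image_le.trans (by simp)
  -- lower bound over ℂ
  have hge : Fintype.card β ≤ (M.map (Int.cast : ℤ → ℂ)).rank := by
    -- the casted basis vectors are ℂ-linearly independent and lie in the column span
    have hind1 : LinearIndependent ℤ (fun a => (b a : ι → ℤ)) :=
      b.linearIndependent.map' Λ.subtype Λ.ker_subtype
    have hind2 : LinearIndependent ℤ (fun a => castPi ℚ ι (b a : ι → ℤ)) := by
      refine hind1.map' (castPi ℚ ι) ?_
      rw [LinearMap.ker_eq_bot']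
      intro v hv
      funext i
      have h : ((v i : ℚ)) = 0 := by simpa [castPi_apply] using congrFun hv i
      have : v i = 0 := by exact_mod_cast h
      simpa using this
    have hind3 : LinearIndependent ℚ (fun a => castPi ℚ ι (b a : ι → ℤ)) :=
      hind2.localization ℚ (nonZeroDivisors ℤ)
    have hind4 : LinearIndependent ℂ
        (fun a i => ((Rat.castHom ℂ) ((castPi ℚ ι (b a : ι → ℤ)) i))) :=
      ext_linearIndependent (Rat.castHom ℂ) hind3
    have heq : (fun a => castPi ℂ ι (b a : ι → ℤ))
        = fun a i => ((Rat.castHom ℂ) ((castPi ℚ ι (b a : ι → ℤ)) i)) := by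
      funext a i
      simp [castPi_apply]
    have hind5 : LinearIndependent ℂ (fun a => castPi ℂ ι (b a : ι → ℤ)) := by
      rw [heq]; exact hind4
    -- they lie in the span of the columns
    have hmem : ∀ a, castPi ℂ ι (b a : ι → ℤ)
        ∈ Submodule.span ℂ (Set.range (M.map (Int.cast : ℤ → ℂ))ᵀ) := by
      intro a
      have hyΛ : (b a : ι → ℤ) ∈ Submodule.span ℤ (Set.range Mᵀ) := (b a).2
      have h2 := span_map_le (K := ℂ) _ hyΛ
      exact Submodule.span_mono (hcols ℂ).symm.subset h2
    haveI : FiniteDimensional ℂ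
        (Submodule.span ℂ (Set.range (M.map (Int.cast : ℤ → ℂ))ᵀ)) :=
      FiniteDimensional.span_of_finite ℂ (Set.finite_range _)
    have hindW : LinearIndependent ℂ (fun a =>
        (⟨castPi ℂ ι (b a : ι → ℤ), hmem a⟩ :
          Submodule.span ℂ (Set.range (M.map (Int.cast : ℤ → ℂ))ᵀ))) := by
      apply LinearIndependent.of_comp (Submodule.span ℂ _).subtype
      exact hind5
    rw [Matrix.rank_eq_finrank_span_cols]
    exact hindW.fintype_card_le_finrank
  exact (hle (ZMod p)).trans hge

end Master2

lemma kernel_finrank_le (p : ℕ) [Fact p.Prime] {ι κ : Type*} [Fintype ι] [Fintype κ]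
    [DecidableEq ι] [DecidableEq κ] (M : Matrix ι κ ℤ) :
    finrank ℂ (LinearMap.ker (M.map (Int.cast : ℤ → ℂ)).mulVecLin) ≤
      finrank (ZMod p) (LinearMap.ker (M.map (Int.cast : ℤ → ZMod p)).mulVecLin) := by
  have hC := LinearMap.finrank_range_add_finrank_ker (M.map (Int.cast : ℤ → ℂ)).mulVecLin
  have hP := LinearMap.finrank_range_add_finrank_ker (M.map (Int.cast : ℤ → ZMod p)).mulVecLin
  rw [Module.finrank_fintype_fun_eq_card] at hC hP
  have hrank := rank_le_rank_complex p M
  rw [Matrix.rank, Matrix.rank] at hrank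
  omega

end RankTools

section Reduction

variable {n : ℕ} (k : Type*) [CommRing k]

/-- substitution `xᵢ ↦ xᵢ + xⱼ`. -/
noncomputable def bSub (i j : Fin n) :
    MvPolynomial (Fin n) k →ₐ[k] MvPolynomial (Fin n) k :=
  aeval (fun t => if t = i then X i + X j else X t)

/-- substitution `xᵢ ↦ xᵢ - xⱼ`. -/
noncomputable def cSub (i j : Fin n) :
    MvPolynomial (Fin n) k →ₐ[k] MvPolynomial (Fin n) k :=
  aeval (fun t => if t = i then X i - X j else X t)

variable {i j : Fin n} (hij : i ≠ j)

include hij in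
lemma cSub_bSub (f : MvPolynomial (Fin n) k) : cSub k i j (bSub k i j f) = f := by
  have : (cSub k i j).comp (bSub k i j) = AlgHom.id k _ := by
    apply MvPolynomial.algHom_ext
    intro t
    by_cases ht : t = i
    · subst ht
      simp [bSub, cSub, aeval_X, if_neg (Ne.symm hij)]
    · simp [bSub, cSub, aeval_X, if_neg ht]
  calc cSub k i j (bSub k i j f) = ((cSub k i j).comp (bSub k i j)) f := rfl
  _ = f := by rw [this]; rfl

include hij in
lemma bSub_cSub (f : MvPolynomial (Fin n) k) : bSub k i j (cSub k i j f) = f := by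
  have : (bSub k i j).comp (cSub k i j) = AlgHom.id k _ := by
    apply MvPolynomial.algHom_ext
    intro t
    by_cases ht : t = i
    · subst ht
      simp [bSub, cSub, aeval_X, if_neg (Ne.symm hij)]
    · simp [bSub, cSub, aeval_X, if_neg ht]
  calc bSub k i j (cSub k i j f) = ((bSub k i j).comp (cSub k i j)) f := rfl
  _ = f := by rw [this]; rfl

include hij in
lemma bSub_X_sub_X : bSub k i j (X i - X j) = X i := by
  rw [map_sub]
  simp [bSub, aeval_X, if_neg (Ne.symm hij)]

lemma cSub_X_pow : cSub k i j (X i ^ e) = (X i - X j) ^ e := by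
  rw [map_pow]
  simp [cSub, aeval_X]

lemma bSub_isHomogeneous {d : ℕ} {f : MvPolynomial (Fin n) k}
    (hf : f.IsHomogeneous d) : (bSub k i j f).IsHomogeneous d := by
  have := hf.aeval (n := 1) (fun t => if t = i then X i + X j else (X t : MvPolynomial (Fin n) k))
    (fun t => by
      split_ifs
      · exact (isHomogeneous_X _ _).add (isHomogeneous_X _ _)
      · exact isHomogeneous_X _ _)
  simpa [bSub, one_mul] using this

include hij in
lemma mem_span_iff (mq : ℕ) (h : MvPolynomial (Fin n) k) :
    h ∈ Ideal.span {(X i - X j) ^ mq} ↔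
      ∀ σ : Fin n →₀ ℕ, σ i < mq → coeff σ (bSub k i j h) = 0 := by
  constructor
  · intro hh σ hσ
    obtain ⟨c, hc⟩ := Ideal.mem_span_singleton'.mp hh
    subst hc
    rw [map_mul, map_pow, bSub_X_sub_X k hij, X_pow_eq_monomial, coeff_mul_monomial']
    rw [if_neg]
    rw [Finsupp.single_le_iff]
    omega
  · intro H
    have hG : bSub k i j h ∈ Ideal.span ({X i ^ mq} : Set (MvPolynomial (Fin n) k)) := by
      rw [show bSub k i j h
          = ∑ σ ∈ (bSub k i j h).support, monomial σ (coeff σ (bSub k i j h)) from as_sum _]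
      apply Ideal.sum_mem
      intro σ hσ
      by_cases hlt : σ i < mq
      · rw [H σ hlt, monomial_zero]
        exact Ideal.zero_mem _
      · refine Ideal.mem_span_singleton'.mpr
          ⟨monomial (σ - Finsupp.single i mq) (coeff σ (bSub k i j h)), ?_⟩
        rw [X_pow_eq_monomial, monomial_mul, mul_one]
        congr 1
        rw [tsub_add_cancel_of_le]
        rw [Finsupp.single_le_iff]
        omega
    obtain ⟨c, hc⟩ := Ideal.mem_span_singleton'.mp hG
    refine Ideal.mem_span_singleton'.mpr ⟨cSub k i j c, ?_⟩
    have := congrArg (cSub k i j) hc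
    rw [map_mul, cSub_X_pow k, cSub_bSub k hij] at this
    exact this

end Reduction

section MapCompat

variable {n : ℕ} {R S : Type*} [CommRing R] [CommRing S] (ψ : R →+* S)

lemma map_bSub (i j : Fin n) (f : MvPolynomial (Fin n) R) :
    MvPolynomial.map ψ (bSub R i j f) = bSub S i j (MvPolynomial.map ψ f) := by
  have h : (MvPolynomial.map ψ).comp (bSub R i j).toRingHom
      = (bSub S i j).toRingHom.comp (MvPolynomial.map ψ) := by
    apply MvPolynomial.ringHom_ext
    · intro r
      simp [bSub, aeval_C, algebraMap_eq]
    · intro t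
      by_cases ht : t = i
      · subst ht
        simp [bSub, aeval_X, if_pos rfl]
      · simp [bSub, aeval_X, if_neg ht]
  exact DFunLike.congr_fun h f

end MapCompat

section DegSet

/-- degree-`d` exponents -/
def degSet (n d : ℕ) : Set (Fin n →₀ ℕ) := {σ | σ.degree = d}

lemma degSet_finite (n d : ℕ) : (degSet n d).Finite :=
  (Finsupp.finite_of_degree_le d).subset (fun _ hσ => le_of_eq hσ)

noncomputable instance (n d : ℕ) : Fintype (degSet n d) := (degSet_finite n d).fintype

/-- ordered pairs of indices -/
abbrev IdxPair (n : ℕ) := {a : Fin n × Fin n // a.1 < a.2}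

end DegSet

section RowF

variable (k : Type*) [CommRing k] {n : ℕ}

/-- the linear functional extracting the coefficient of `σ'` in `B_{ij}(F - s_{ij} F)`. -/
noncomputable def rowF (i j : Fin n) (σ' : Fin n →₀ ℕ) :
    MvPolynomial (Fin n) k →ₗ[k] k :=
  (lcoeff k σ') ∘ₗ (bSub k i j).toLinearMap ∘ₗ
    (LinearMap.id - (rename (Equiv.swap i j)).toLinearMap)

lemma rowF_apply (i j : Fin n) (σ' : Fin n →₀ ℕ) (f : MvPolynomial (Fin n) k) :
    rowF k i j σ' f = coeff σ' (bSub k i j (f - rename (Equiv.swap i j) f)) := rfl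

variable {k}

lemma rowF_int_cast (ψ : ℤ →+* k) (i j : Fin n) (σ' : Fin n →₀ ℕ)
    (f : MvPolynomial (Fin n) ℤ) :
    ψ (rowF ℤ i j σ' f) = rowF k i j σ' (MvPolynomial.map ψ f) := by
  rw [rowF_apply, rowF_apply, ← coeff_map, map_bSub]
  congr 2
  rw [map_sub, map_rename]

end RowF

section QMatrix

variable (n m d : ℕ)

/-- The integer matrix of the quasi-invariance conditions on degree-`d` coefficients. -/
noncomputable def qMat : Matrix (IdxPair n × degSet n d) (degSet n d) ℤ :=
  fun r c => if (r.2 : Fin n →₀ ℕ) r.1.1.1 < 2 * m + 1 then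
    rowF ℤ r.1.1.1 r.1.1.2 r.2 (monomial (c : Fin n →₀ ℕ) 1) else 0

variable {n m d}

lemma qMat_cast (k : Type*) [CommRing k] (r : IdxPair n × degSet n d) (c : degSet n d) :
    ((qMat n m d r c : ℤ) : k) = if (r.2 : Fin n →₀ ℕ) r.1.1.1 < 2 * m + 1 then
      rowF k r.1.1.1 r.1.1.2 r.2 (monomial (c : Fin n →₀ ℕ) 1) else 0 := by
  rw [qMat]
  split_ifs with hcond
  · rw [show ((rowF ℤ r.1.1.1 r.1.1.2 r.2 (monomial (c : Fin n →₀ ℕ) 1) : ℤ) : k)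
        = (Int.castRingHom k) (rowF ℤ r.1.1.1 r.1.1.2 r.2 (monomial (c : Fin n →₀ ℕ) 1))
        from rfl]
    rw [rowF_int_cast, map_monomial]
    simp
  · simp

end QMatrix

section Key

variable {n m d : ℕ} {k : Type*} [CommRing k]

lemma mem_quasi_iff (F : MvPolynomial (Fin n) k) :
    F ∈ quasiInvariantSubmodule k n m d ↔
      F.IsHomogeneous d ∧ ∀ i j : Fin n, i < j →
        (F - rename (Equiv.swap i j) F) ∈
          Ideal.span {(X i - X j : MvPolynomial (Fin n) k) ^ (2 * m + 1)} := by
  simp only [quasiInvariantSubmodule, Submodule.mem_inf, Submodule.mem_iInf,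
    Submodule.mem_comap, Submodule.restrictScalars_mem, LinearMap.sub_apply,
    LinearMap.id_apply, AlgHom.toLinearMap_apply, mem_homogeneousSubmodule]

lemma support_subset_degSet {F : MvPolynomial (Fin n) k} (hF : F.IsHomogeneous d) :
    F.support ⊆ (degSet n d).toFinset := by
  intro σ hσ
  rw [Set.mem_toFinset]
  have := hF (mem_support_iff.mp hσ)
  rw [degSet, Set.mem_setOf_eq, Finsupp.degree_eq_weight_one]
  exact this

lemma sum_monomial_coeff {F : MvPolynomial (Fin n) k} (hF : F.IsHomogeneous d) :
    ∑ c : degSet n d, monomial (c : Fin n →₀ ℕ) (coeff (c : Fin n →₀ ℕ) F) = F := by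
  rw [Finset.sum_set_coe (f := fun σ => monomial σ (coeff σ F))]
  rw [← Finset.sum_subset (support_subset_degSet hF)
    (fun x _ hnx => by rw [notMem_support_iff.mp hnx, monomial_zero])]
  exact (as_sum F).symm

lemma mulVec_coeff_eq (F : MvPolynomial (Fin n) k) (hF : F.IsHomogeneous d)
    (r : IdxPair n × degSet n d) :
    ((qMat n m d).map (Int.cast : ℤ → k)).mulVec
        (fun c : degSet n d => coeff (c : Fin n →₀ ℕ) F) r
      = if (r.2 : Fin n →₀ ℕ) r.1.1.1 < 2 * m + 1 then
          rowF k r.1.1.1 r.1.1.2 r.2 F else 0 := by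
  rw [Matrix.mulVec, dotProduct]
  simp only [Matrix.map_apply, qMat_cast]
  split_ifs with hcond
  · have : ∀ c : degSet n d,
        rowF k r.1.1.1 r.1.1.2 r.2 (monomial (c : Fin n →₀ ℕ) 1) * coeff (c : Fin n →₀ ℕ) F
        = rowF k r.1.1.1 r.1.1.2 r.2 (monomial (c : Fin n →₀ ℕ) (coeff (c : Fin n →₀ ℕ) F)) := by
      intro c
      rw [mul_comm, ← smul_eq_mul, ← LinearMap.map_smul]
      congr 1
      rw [MvPolynomial.smul_monomial, smul_eq_mul, mul_one]
    simp only [this]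
    rw [← map_sum, sum_monomial_coeff hF]
  · simp

lemma mem_quasi_iff_mulVec {F : MvPolynomial (Fin n) k} (hF : F.IsHomogeneous d) :
    F ∈ quasiInvariantSubmodule k n m d ↔
      ((qMat n m d).map (Int.cast : ℤ → k)).mulVec
        (fun c : degSet n d => coeff (c : Fin n →₀ ℕ) F) = 0 := by
  rw [mem_quasi_iff]
  constructor
  · rintro ⟨-, hcond⟩
    funext r
    rw [mulVec_coeff_eq F hF r]
    split_ifs with hc
    · have hij : r.1.1.1 ≠ r.1.1.2 := ne_of_lt r.1.2
      have := (mem_span_iff k hij (2 * m + 1) _).mp (hcond r.1.1.1 r.1.1.2 r.1.2)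
      rw [rowF_apply]
      exact this _ hc
    · rfl
  · intro hv
    refine ⟨hF, fun i j hij => ?_⟩
    rw [mem_span_iff k (ne_of_lt hij) (2 * m + 1)]
    intro σ' hσ'
    by_cases hdeg : σ'.degree = d
    · have := congrFun hv (⟨(i, j), hij⟩, ⟨σ', hdeg⟩)
      rw [mulVec_coeff_eq F hF] at this
      rw [if_pos hσ'] at this
      rw [← rowF_apply]
      exact this
    · have h1 : (F - rename (Equiv.swap i j) F).IsHomogeneous d :=
        hF.sub (hF.rename_isHomogeneous)
      have h2 := bSub_isHomogeneous k (i := i) (j := j) h1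
      exact h2.coeff_eq_zero hdeg

end Key

section FinalEquiv

variable (n m d : ℕ) (k : Type*) [CommRing k]

noncomputable def eEquiv : (homogeneousSubmodule (Fin n) k d) ≃ₗ[k] (degSet n d → k) :=
  (LinearEquiv.ofEq _ _
      (homogeneousSubmodule_eq_finsupp_supported (Fin n) k d :
        homogeneousSubmodule (Fin n) k d = AddMonoidAlgebra.supported k k (degSet n d))).trans
    ((AddMonoidAlgebra.supportedEquivFinsupp (degSet n d)).trans
      (Finsupp.linearEquivFunOnFinite k k (degSet n d)))

lemma eEquiv_apply (F : homogeneousSubmodule (Fin n) k d) (σ : degSet n d) :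
    eEquiv n d k F σ = coeff (σ : Fin n →₀ ℕ) (F : MvPolynomial (Fin n) k) := rfl

lemma finrank_quasi_eq :
    Module.finrank k (quasiInvariantSubmodule k n m d)
      = Module.finrank k
          (LinearMap.ker ((qMat n m d).map (Int.cast : ℤ → k)).mulVecLin) := by
  have hle : quasiInvariantSubmodule k n m d ≤ homogeneousSubmodule (Fin n) k d :=
    inf_le_left
  set Q' := (quasiInvariantSubmodule k n m d).comap
    (homogeneousSubmodule (Fin n) k d).subtype with hQ'
  have e1 : Q' ≃ₗ[k] quasiInvariantSubmodule k n m d :=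
    Submodule.comapSubtypeEquivOfLe hle
  have e2 := (eEquiv n d k).submoduleMap Q'
  have hker : Q'.map ((eEquiv n d k) : _ →ₗ[k] _)
      = LinearMap.ker ((qMat n m d).map (Int.cast : ℤ → k)).mulVecLin := by
    ext v
    rw [Submodule.mem_map_equiv, LinearMap.mem_ker, hQ', Submodule.mem_comap]
    have hF : (((eEquiv n d k).symm v : homogeneousSubmodule (Fin n) k d) :
        MvPolynomial (Fin n) k).IsHomogeneous d :=
      ((eEquiv n d k).symm v).2
    rw [Submodule.subtype_apply, mem_quasi_iff_mulVec hF]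
    have hvv : (fun c : degSet n d => coeff (c : Fin n →₀ ℕ)
        (((eEquiv n d k).symm v : homogeneousSubmodule (Fin n) k d) :
          MvPolynomial (Fin n) k)) = v := by
      funext c
      rw [← eEquiv_apply, LinearEquiv.apply_symm_apply]
    rw [hvv, Matrix.mulVecLin_apply]
  rw [← (e1.symm.trans (e2.trans (LinearEquiv.ofEq _ _ hker))).finrank_eq]

end FinalEquiv

/-- for a prime `p` and integers `m ≥ 0`, `n ≥ 1`, `d ≥ 0`, the dimension of
`Q_{m,d}(n)` over `𝔽_p` is at least as large as the dimension over `ℂ`. -/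
theorem stmt0 (p : ℕ) (hp : p.Prime) [Fact p.Prime] (m n d : ℕ) (hn : 1 ≤ n) :
    Module.finrank ℂ (quasiInvariantSubmodule ℂ n m d)
      ≤ Module.finrank (ZMod p) (quasiInvariantSubmodule (ZMod p) n m d) := by
  classical
  rw [finrank_quasi_eq n m d ℂ, finrank_quasi_eq n m d (ZMod p)]
  exact kernel_finrank_le p (qMat n m d)
end

section
/- Let p be a prime and m ≥ 0, d ≥ 0 integers. Let f ∈ F_p[x,y] be homogeneous of degree d with (x − y)^{2m+1} dividing f(x,y) − f(y,x) in F_p[x,y]. Then there exists F ∈ ℤ[x,y], homogeneous of degree d, such that (x − y)^{2m+1} divides F(x,y) − F(y,x) in ℤ[x,y] and F reduces to f modulo p. -/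
open MvPolynomial

namespace Stmt2Aux

variable {p : ℕ} [Fact p.Prime]

noncomputable section

/-- Coefficientwise lift from `ZMod p` polynomials to `ℤ` polynomials. -/
def L (r : MvPolynomial (Fin 2) (ZMod p)) : MvPolynomial (Fin 2) ℤ :=
  ∑ μ ∈ r.support, monomial μ ((r.coeff μ).val : ℤ)

lemma coeff_sum_monomial (s : Finset (Fin 2 →₀ ℕ)) (c : (Fin 2 →₀ ℕ) → ℤ) (ν : Fin 2 →₀ ℕ) :
    coeff ν (∑ μ ∈ s, monomial μ (c μ)) = if ν ∈ s then c ν else 0 := by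
  rw [MvPolynomial.coeff_sum]
  simp only [coeff_monomial]
  exact Finset.sum_ite_eq' s ν c

lemma coeff_L (r : MvPolynomial (Fin 2) (ZMod p)) (ν : Fin 2 →₀ ℕ) :
    coeff ν (L r) = ((r.coeff ν).val : ℤ) := by
  rw [L, coeff_sum_monomial]
  split_ifs with h
  · rfl
  · rw [notMem_support_iff.mp h]; simp

lemma map_L (r : MvPolynomial (Fin 2) (ZMod p)) :
    MvPolynomial.map (Int.castRingHom (ZMod p)) (L r) = r := by
  ext ν
  rw [coeff_map, coeff_L]
  simp [ZMod.natCast_val, ZMod.intCast_cast, ZMod.cast_id]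

lemma L_isHomogeneous {r : MvPolynomial (Fin 2) (ZMod p)} {n : ℕ}
    (hr : r.IsHomogeneous n) : (L r).IsHomogeneous n := by
  intro ν hν
  rw [coeff_L] at hν
  apply hr
  intro h
  rw [h] at hν
  simp at hν

/-- the swap equivalence -/
def e : Fin 2 ≃ Fin 2 := Equiv.swap 0 1

lemma md_md (ν : Fin 2 →₀ ℕ) :
    Finsupp.mapDomain e (Finsupp.mapDomain e ν) = ν := by
  rw [← Finsupp.mapDomain_comp]
  have : (e : Fin 2 → Fin 2) ∘ e = id := by
    funext a
    exact Equiv.swap_apply_self 0 1 a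
  rw [this, Finsupp.mapDomain_id]

lemma coeff_swap (P : MvPolynomial (Fin 2) ℤ) (ν : Fin 2 →₀ ℕ) :
    coeff ν (rename e P) = coeff (Finsupp.mapDomain e ν) P := by
  conv_lhs => rw [← md_md ν]
  rw [coeff_rename_mapDomain _ e.injective]

lemma coeff_swap' (P : MvPolynomial (Fin 2) (ZMod p)) (ν : Fin 2 →₀ ℕ) :
    coeff ν (rename e P) = coeff (Finsupp.mapDomain e ν) P := by
  conv_lhs => rw [← md_md ν]
  rw [coeff_rename_mapDomain _ e.injective]

lemma L_rename (r : MvPolynomial (Fin 2) (ZMod p)) :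
    L (rename e r) = rename e (L r) := by
  ext ν
  rw [coeff_L, coeff_swap, coeff_L, coeff_swap']

lemma md_apply_zero (ν : Fin 2 →₀ ℕ) : (Finsupp.mapDomain e ν) 0 = ν 1 := by
  rw [Finsupp.mapDomain_equiv_apply]
  simp [e]

lemma md_apply_one (ν : Fin 2 →₀ ℕ) : (Finsupp.mapDomain e ν) 1 = ν 0 := by
  rw [Finsupp.mapDomain_equiv_apply]
  simp [e]

lemma md_diag {ν : Fin 2 →₀ ℕ} (h : ν 0 = ν 1) : Finsupp.mapDomain e ν = ν := by
  ext i
  fin_cases i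
  · show (Finsupp.mapDomain e ν) 0 = ν 0
    rw [md_apply_zero, h]
  · show (Finsupp.mapDomain e ν) 1 = ν 1
    rw [md_apply_one, h]

variable {R : Type*} [CommSemiring R]

/-- homogeneous component of product with a homogeneous polynomial -/
lemma hc_mul {a : MvPolynomial (Fin 2) R} {k : ℕ} (ha : a.IsHomogeneous k)
    (b : MvPolynomial (Fin 2) R) (n : ℕ) (hkn : k ≤ n) :
    homogeneousComponent n (a * b) = a * homogeneousComponent (n - k) b := by
  conv_lhs => rw [← sum_homogeneousComponent b, Finset.mul_sum, map_sum]
  have key : ∀ j, homogeneousComponent n (a * homogeneousComponent j b) =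
      if j = n - k then a * homogeneousComponent j b else 0 := by
    intro j
    have hj : (a * homogeneousComponent j b).IsHomogeneous (k + j) :=
      ha.mul (homogeneousComponent_isHomogeneous j b)
    rw [homogeneousComponent_of_mem ((mem_homogeneousSubmodule _ _).mpr hj)]
    congr 1
    simp only [eq_iff_iff]
    omega
  simp only [key]
  rw [Finset.sum_ite_eq' _ (n - k)]
  split_ifs with h
  · rfl
  · rw [Finset.mem_range, not_lt] at h
    rw [homogeneousComponent_eq_zero]
    · ring
    · omega

lemma hc_mul_lt {a : MvPolynomial (Fin 2) R} {k : ℕ} (ha : a.IsHomogeneous k)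
    (b : MvPolynomial (Fin 2) R) (n : ℕ) (hnk : n < k) :
    homogeneousComponent n (a * b) = 0 := by
  conv_lhs => rw [← sum_homogeneousComponent b, Finset.mul_sum, map_sum]
  apply Finset.sum_eq_zero
  intro j _
  have hj : (a * homogeneousComponent j b).IsHomogeneous (k + j) :=
    ha.mul (homogeneousComponent_isHomogeneous j b)
  rw [homogeneousComponent_of_mem ((mem_homogeneousSubmodule _ _).mpr hj), if_neg]
  omega

end

end Stmt2Aux

/-- let `p` be a prime and `m, d ≥ 0`. If `f ∈ 𝔽_p[x,y]` is homogeneous of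
degree `d` with `(x − y)^{2m+1} ∣ f(x,y) − f(y,x)` in `𝔽_p[x,y]`, then there is a
homogeneous `F ∈ ℤ[x,y]` of degree `d` with `(x − y)^{2m+1} ∣ F(x,y) − F(y,x)` in
`ℤ[x,y]` that reduces to `f` modulo `p`. -/
theorem stmt2 (p : ℕ) (hp : p.Prime) [Fact p.Prime] (m d : ℕ)
    (f : MvPolynomial (Fin 2) (ZMod p)) (hfhom : f.IsHomogeneous d)
    (hfqi : (X 0 - X 1) ^ (2 * m + 1) ∣ f - rename (Equiv.swap (0 : Fin 2) 1) f) :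
    ∃ F : MvPolynomial (Fin 2) ℤ, F.IsHomogeneous d ∧
      (X 0 - X 1) ^ (2 * m + 1) ∣ F - rename (Equiv.swap (0 : Fin 2) 1) F ∧
      MvPolynomial.map (Int.castRingHom (ZMod p)) F = f := by
  classical
  have hXne : (X 0 - X 1 : MvPolynomial (Fin 2) (ZMod p)) ≠ 0 :=
    sub_ne_zero.mpr (fun h => absurd (X_injective h) (by decide))
  have hWne : ((X 0 - X 1 : MvPolynomial (Fin 2) (ZMod p)) ^ (2 * m + 1)) ≠ 0 :=
    pow_ne_zero _ hXne
  have hWhom : ((X 0 - X 1 : MvPolynomial (Fin 2) (ZMod p)) ^ (2 * m + 1)).IsHomogeneous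
      (2 * m + 1) := by
    simpa using ((isHomogeneous_X (ZMod p) (0 : Fin 2)).sub (isHomogeneous_X (ZMod p) 1)).pow
      (2 * m + 1)
  have hdiffhom : (f - rename (Equiv.swap (0 : Fin 2) 1) f).IsHomogeneous d :=
    hfhom.sub hfhom.rename_isHomogeneous
  have hswsw : ∀ P : MvPolynomial (Fin 2) (ZMod p),
      rename (Equiv.swap (0 : Fin 2) 1) (rename (Equiv.swap (0 : Fin 2) 1) P) = P := by
    intro P
    rw [rename_rename]
    have : (⇑(Equiv.swap (0 : Fin 2) 1)) ∘ (⇑(Equiv.swap (0 : Fin 2) 1)) = id := by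
      funext a; exact Equiv.swap_apply_self 0 1 a
    rw [this, rename_id, AlgHom.id_apply]
  by_cases hle : 2 * m + 1 ≤ d
  · -- main case
    obtain ⟨q, hq⟩ := hfqi
    set q' := homogeneousComponent (d - (2 * m + 1)) q with hq'def
    have hq' : f - rename (Equiv.swap (0 : Fin 2) 1) f = (X 0 - X 1) ^ (2 * m + 1) * q' := by
      have h1 := Stmt2Aux.hc_mul hWhom q d hle
      rw [← hq, homogeneousComponent_of_mem ((mem_homogeneousSubmodule _ _).mpr hdiffhom),
        if_pos rfl] at h1
      exact h1
    have hq'hom : q'.IsHomogeneous (d - (2 * m + 1)) := homogeneousComponent_isHomogeneous _ _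
    have hrenW : rename (Equiv.swap (0 : Fin 2) 1)
        ((X 0 - X 1 : MvPolynomial (Fin 2) (ZMod p)) ^ (2 * m + 1)) =
        -((X 0 - X 1) ^ (2 * m + 1)) := by
      rw [map_pow, map_sub, rename_X, rename_X, Equiv.swap_apply_left, Equiv.swap_apply_right,
        ← neg_sub, Odd.neg_pow ⟨m, by ring⟩]
    have hqsym : rename (Equiv.swap (0 : Fin 2) 1) q' = q' := by
      have h2 := congrArg (rename (Equiv.swap (0 : Fin 2) 1)) hq'
      rw [map_sub, map_mul, hrenW, hswsw] at h2
      have h3 : (X 0 - X 1 : MvPolynomial (Fin 2) (ZMod p)) ^ (2 * m + 1) *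
          rename (Equiv.swap (0 : Fin 2) 1) q' =
          (X 0 - X 1) ^ (2 * m + 1) * q' := by
        linear_combination h2 + hq'
      exact mul_left_cancel₀ hWne h3
    -- integer side
    set S := Stmt2Aux.L q' with hSdef
    have hSsym : rename (Equiv.swap (0 : Fin 2) 1) S = S := by
      have h4 := Stmt2Aux.L_rename (p := p) q'
      simp only [Stmt2Aux.e] at h4
      rw [← h4, hqsym]
    have hShom : S.IsHomogeneous (d - (2 * m + 1)) := Stmt2Aux.L_isHomogeneous hq'hom
    set G : MvPolynomial (Fin 2) ℤ := (X 0 - X 1) ^ (2 * m + 1) * S with hGdef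
    have hGhom : G.IsHomogeneous d := by
      have : ((X 0 - X 1 : MvPolynomial (Fin 2) ℤ) ^ (2 * m + 1)).IsHomogeneous (2 * m + 1) := by
        simpa using ((isHomogeneous_X ℤ (0 : Fin 2)).sub (isHomogeneous_X ℤ 1)).pow (2 * m + 1)
      have h5 := this.mul hShom
      rwa [Nat.add_sub_cancel' hle] at h5
    have hrenWZ : rename (Equiv.swap (0 : Fin 2) 1)
        ((X 0 - X 1 : MvPolynomial (Fin 2) ℤ) ^ (2 * m + 1)) =
        -((X 0 - X 1) ^ (2 * m + 1)) := by
      rw [map_pow, map_sub, rename_X, rename_X, Equiv.swap_apply_left, Equiv.swap_apply_right,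
        ← neg_sub, Odd.neg_pow ⟨m, by ring⟩]
    have hGanti : rename (Equiv.swap (0 : Fin 2) 1) G = -G := by
      rw [hGdef, map_mul, hrenWZ, hSsym, neg_mul]
    have hGanti' : ∀ ν : Fin 2 →₀ ℕ,
        coeff (Finsupp.mapDomain (Equiv.swap (0 : Fin 2) 1) ν) G = -coeff ν G := by
      intro ν
      have h6 := congrArg (coeff ν) hGanti
      have h7 := Stmt2Aux.coeff_swap G ν
      simp only [Stmt2Aux.e] at h7
      rw [h7, coeff_neg] at h6
      exact h6
    set T : MvPolynomial (Fin 2) ℤ :=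
      ∑ μ ∈ G.support.filter (fun μ => μ 1 < μ 0), monomial μ (coeff μ G) with hTdef
    have hcoeffT : ∀ ν : Fin 2 →₀ ℕ, coeff ν T = if ν 1 < ν 0 then coeff ν G else 0 := by
      intro ν
      rw [hTdef, Stmt2Aux.coeff_sum_monomial]
      by_cases hp1 : ν 1 < ν 0
      · simp only [Finset.mem_filter, hp1, and_true, if_true]
        split_ifs with h8
        · rfl
        · exact (notMem_support_iff.mp h8).symm
      · simp [Finset.mem_filter, hp1]
    have hTG : T - rename (Equiv.swap (0 : Fin 2) 1) T = G := by
      ext ν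
      have h9 := Stmt2Aux.coeff_swap T ν
      simp only [Stmt2Aux.e] at h9
      have hz := Stmt2Aux.md_apply_zero ν
      have ho := Stmt2Aux.md_apply_one ν
      simp only [Stmt2Aux.e] at hz ho
      rw [coeff_sub, hcoeffT, h9, hcoeffT, hz, ho]
      rcases lt_trichotomy (ν 1) (ν 0) with h|h|h
      · rw [if_pos h, if_neg (by omega)]; ring
      · rw [if_neg (by omega), if_neg (by omega)]
        have hd0 : Finsupp.mapDomain (⇑(Equiv.swap (0 : Fin 2) 1)) ν = ν := by
          have := Stmt2Aux.md_diag (ν := ν) (by omega)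
          simpa only [Stmt2Aux.e] using this
        have h10 := hGanti' ν
        rw [hd0] at h10
        have : coeff ν G = 0 := by omega
        simp [this]
      · rw [if_neg (by omega), if_pos h]
        rw [hGanti' ν]
        ring
    have hThom : T.IsHomogeneous d := by
      intro ν hν
      rw [hcoeffT] at hν
      split_ifs at hν with h11
      · exact hGhom hν
      · exact (hν rfl).elim
    set h : MvPolynomial (Fin 2) (ZMod p) :=
      f - MvPolynomial.map (Int.castRingHom (ZMod p)) T with hhdef
    have hmapG : MvPolynomial.map (Int.castRingHom (ZMod p)) G =
        (X 0 - X 1) ^ (2 * m + 1) * q' := by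
      rw [hGdef, map_mul, map_pow, map_sub, map_X, map_X, hSdef, Stmt2Aux.map_L]
    have hrenT : rename (Equiv.swap (0 : Fin 2) 1) T = T - G := by
      rw [← hTG]; ring
    have hhsym : rename (Equiv.swap (0 : Fin 2) 1) h = h := by
      rw [hhdef, map_sub, ← map_rename, hrenT, map_sub, hmapG, ← hq']
      ring
    have hhhom : h.IsHomogeneous d := hfhom.sub (hThom.map _)
    refine ⟨Stmt2Aux.L h + T, (Stmt2Aux.L_isHomogeneous hhhom).add hThom, ⟨S, ?_⟩, ?_⟩
    · have h12 : rename (Equiv.swap (0 : Fin 2) 1) (Stmt2Aux.L h) = Stmt2Aux.L h := by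
        have h13 := Stmt2Aux.L_rename (p := p) h
        simp only [Stmt2Aux.e] at h13
        rw [← h13, hhsym]
      rw [map_add, h12, hrenT, ← hGdef]
      ring
    · rw [map_add, Stmt2Aux.map_L, hhdef, sub_add_cancel]
  · -- degenerate case : f is symmetric
    have hzero : f - rename (Equiv.swap (0 : Fin 2) 1) f = 0 := by
      obtain ⟨q, hq⟩ := hfqi
      have h1 := Stmt2Aux.hc_mul_lt hWhom q d (by omega)
      rwa [← hq, homogeneousComponent_of_mem ((mem_homogeneousSubmodule _ _).mpr hdiffhom),
        if_pos rfl] at h1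
    have hfix : rename (Equiv.swap (0 : Fin 2) 1) f = f := by
      rw [sub_eq_zero] at hzero; exact hzero.symm
    refine ⟨Stmt2Aux.L f, Stmt2Aux.L_isHomogeneous hfhom, ?_, Stmt2Aux.map_L f⟩
    have h14 : rename (Equiv.swap (0 : Fin 2) 1) (Stmt2Aux.L f) = Stmt2Aux.L f := by
      have h15 := Stmt2Aux.L_rename (p := p) f
      simp only [Stmt2Aux.e] at h15
      rw [← h15, hfix]
    rw [h14, sub_self]
    exact dvd_zero _
end

section
/- Let p be a prime and m ≥ 0, d ≥ 0 integers. Then dim_{F_p} Q_{m,d}(2) = dim_ℂ Q_{m,d}(2); that is, for two variables the Hilbert series of the space of m-quasi-invariant polynomials over F_p coincides with that over ℂ. -/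
open MvPolynomial

namespace QI
variable {k : Type*} [Field k]

noncomputable def mon (i j : ℕ) : Fin 2 →₀ ℕ := Finsupp.single 0 i + Finsupp.single 1 j
@[simp] lemma mon_apply_zero (i j : ℕ) : mon i j 0 = i := by simp [mon]
@[simp] lemma mon_apply_one (i j : ℕ) : mon i j 1 = j := by simp [mon]
lemma mon_add_mon (i j i' j' : ℕ) : mon i j + mon i' j' = mon (i+i') (j+j') := by
  ext x; fin_cases x <;> simp
lemma smul_mon (e i j : ℕ) : e • mon i j = mon (e*i) (e*j) := by
  ext x; fin_cases x <;> simp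

lemma eq_mon (μ : Fin 2 →₀ ℕ) : μ = mon (μ 0) (μ 1) := by
  ext x
  fin_cases x <;> simp

lemma mon_inj {i j i' j' : ℕ} : mon i j = mon i' j' ↔ i = i' ∧ j = j' := by
  constructor
  · intro h
    constructor
    · have := DFunLike.congr_fun h (0 : Fin 2); simpa using this
    · have := DFunLike.congr_fun h (1 : Fin 2); simpa using this
  · rintro ⟨rfl, rfl⟩; rfl


lemma degree_mon (i j : ℕ) : (mon i j).degree = i + j := by
  have : ∀ μ : Fin 2 →₀ ℕ, μ.degree = μ 0 + μ 1 := by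
    intro μ
    rw [Finsupp.degree_apply, Finset.sum_subset (Finset.subset_univ μ.support)]
    · exact Fin.sum_univ_two μ
    · intro x _ hx
      simpa using (Finsupp.notMem_support_iff).1 hx
  simp [this]


/-- the swap of the two variables -/
noncomputable def sP (F : MvPolynomial (Fin 2) k) : MvPolynomial (Fin 2) k :=
  rename (Equiv.swap (0 : Fin 2) 1) F

lemma mapDomain_swap (i j : ℕ) :
    Finsupp.mapDomain (⇑(Equiv.swap (0 : Fin 2) 1)) (mon i j) = mon j i := by
  rw [mon, Finsupp.mapDomain_add, Finsupp.mapDomain_single, Finsupp.mapDomain_single]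
  simp [mon, add_comm]

lemma coeff_sP (i j : ℕ) (F : MvPolynomial (Fin 2) k) :
    coeff (mon i j) (sP F) = coeff (mon j i) F := by
  rw [sP, ← mapDomain_swap j i, coeff_rename_mapDomain _ (Equiv.swap _ _).injective]

lemma sP_monomial (i j : ℕ) (r : k) : sP (monomial (mon i j) r) = monomial (mon j i) r := by
  rw [sP, rename_monomial, mapDomain_swap]

lemma sP_sP (F : MvPolynomial (Fin 2) k) : sP (sP F) = F := by
  rw [sP, sP, rename_rename]
  have : (⇑(Equiv.swap (0:Fin 2) 1) ∘ ⇑(Equiv.swap (0:Fin 2) 1)) = id := by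
    funext x; simp
  rw [this, rename_id, AlgHom.id_apply]

lemma sP_X0 : sP (X 0 : MvPolynomial (Fin 2) k) = X 1 := by simp [sP]
lemma sP_X1 : sP (X 1 : MvPolynomial (Fin 2) k) = X 0 := by simp [sP]


-- monomial forms
lemma single_zero_eq_mon (c : ℕ) : Finsupp.single (0 : Fin 2) c = mon c 0 := by
  ext x; fin_cases x <;> simp

lemma single_one_eq_mon (c : ℕ) : Finsupp.single (1 : Fin 2) c = mon 0 c := by
  ext x; fin_cases x <;> simp

lemma X0_pow (c : ℕ) : (X 0 : MvPolynomial (Fin 2) k)^c = monomial (mon c 0) 1 := by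
  rw [X_pow_eq_monomial, single_zero_eq_mon]

lemma X1_pow (c : ℕ) : (X 1 : MvPolynomial (Fin 2) k)^c = monomial (mon 0 c) 1 := by
  rw [X_pow_eq_monomial, single_one_eq_mon]

lemma X0X1_pow (a : ℕ) : ((X 0 : MvPolynomial (Fin 2) k) * X 1)^a = monomial (mon a a) 1 := by
  have h : (X 0 : MvPolynomial (Fin 2) k) * X 1 = monomial (mon 1 1) 1 := by
    rw [X, X, monomial_mul, mon, one_mul]
  rw [h, monomial_pow, smul_mon, one_pow, mul_one]


-- coefficient vanishing when the y-exponent is too small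
lemma coeff_mul_right_eq_zero {c : ℕ} (p q : MvPolynomial (Fin 2) k)
    (hq : ∀ ν ∈ q.support, c ≤ ν 1) {μ : Fin 2 →₀ ℕ} (hμ : μ 1 < c) :
    coeff μ (p * q) = 0 := by
  classical
  by_contra h
  have hmem : μ ∈ (p * q).support := by rwa [mem_support_iff]
  have := support_mul p q hmem
  rw [Finset.mem_add] at this
  obtain ⟨ν₁, hν₁, ν₂, hν₂, rfl⟩ := this
  have := hq ν₂ hν₂
  simp only [Finsupp.add_apply] at hμ
  omega

lemma coeff_mul_X1_pow_eq_zero {c : ℕ} (p : MvPolynomial (Fin 2) k) {μ : Fin 2 →₀ ℕ}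
    (hμ : μ 1 < c) : coeff μ (p * (X 1)^c) = 0 := by
  apply coeff_mul_right_eq_zero p _ _ hμ
  intro ν hν
  rw [X1_pow] at hν
  have := support_monomial_subset hν
  simp only [Finset.mem_singleton] at this
  subst this; simp

lemma coeff_mul_X0X1_pow_eq_zero {a : ℕ} (p : MvPolynomial (Fin 2) k) {μ : Fin 2 →₀ ℕ}
    (hμ : μ 1 < a) : coeff μ (p * ((X 0) * (X 1))^a) = 0 := by
  apply coeff_mul_right_eq_zero p _ _ hμ
  intro ν hν
  rw [X0X1_pow] at hν
  have := support_monomial_subset hν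
  simp only [Finset.mem_singleton] at this
  subst this; simp

-- the leading coefficient of (x-y)^n
lemma coeff_delta_pow (n : ℕ) :
    coeff (mon n 0) (((X 0 : MvPolynomial (Fin 2) k) - X 1)^n) = 1 := by
  induction n with
  | zero =>
    have : mon 0 0 = (0 : Fin 2 →₀ ℕ) := by ext x; fin_cases x <;> simp
    simp [this]
  | succ n ih =>
    rw [pow_succ, mul_sub]
    rw [coeff_sub]
    have h1 : coeff (mon (n+1) 0) (((X 0 : MvPolynomial (Fin 2) k) - X 1)^n * X 0) = 1 := by
      have hm : mon (n+1) 0 = mon n 0 + Finsupp.single 0 1 := by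
        rw [single_zero_eq_mon, mon_add_mon]
      rw [hm, coeff_mul_X, ih]
    have h2 : coeff (mon (n+1) 0) (((X 0 : MvPolynomial (Fin 2) k) - X 1)^n * X 1) = 0 := by
      have := coeff_mul_X1_pow_eq_zero (c := 1)
        (((X 0 : MvPolynomial (Fin 2) k) - X 1)^n) (μ := mon (n+1) 0) (by simp)
      rwa [pow_one] at this
    rw [h1, h2, sub_zero]

-- homogeneous polynomials in two variables: vanishing test
lemma eq_zero_of_coeffs {F : MvPolynomial (Fin 2) k} {dd : ℕ} (hF : F.IsHomogeneous dd)
    (h : ∀ i ≤ dd, coeff (mon i (dd - i)) F = 0) : F = 0 := by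
  by_contra hne
  obtain ⟨μ, hμ⟩ := ne_zero_iff.1 hne
  have hdeg : μ.degree = dd := by
    by_contra h'
    exact hμ (hF.coeff_eq_zero h')
  have h2 : μ.degree = μ 0 + μ 1 := by
    rw [Finsupp.degree_apply, Finset.sum_subset (Finset.subset_univ μ.support)]
    · exact (Fin.sum_univ_two μ).symm
    · intro x _ hx
      simpa using (Finsupp.notMem_support_iff).1 hx
  have hle : μ 0 ≤ dd := by omega
  have := h (μ 0) hle
  have hμeq : mon (μ 0) (dd - μ 0) = μ := by
    conv_rhs => rw [eq_mon μ]
    exact (mon_inj).2 ⟨rfl, by omega⟩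
  rw [hμeq] at this
  exact hμ this

lemma coeff_symm {F : MvPolynomial (Fin 2) k} (hs : sP F = F) (i j : ℕ) :
    coeff (mon i j) F = coeff (mon j i) F := by
  conv_lhs => rw [← hs]
  rw [coeff_sP]

-- homogeneous component of a product with a homogeneous factor
lemma hc_mul {P : MvPolynomial (Fin 2) k} {e : ℕ} (hP : P.IsHomogeneous e)
    (g : MvPolynomial (Fin 2) k) (n : ℕ) :
    homogeneousComponent n (P * g) =
      if e ≤ n then P * homogeneousComponent (n - e) g else 0 := by
  classical
  conv_lhs => rw [← sum_homogeneousComponent g]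
  rw [Finset.mul_sum, map_sum]
  have hterm : ∀ i, homogeneousComponent n (P * homogeneousComponent i g)
      = if n = e + i then P * homogeneousComponent i g else 0 := by
    intro i
    exact homogeneousComponent_of_mem (hP.mul (homogeneousComponent_isHomogeneous i g))
  simp_rw [hterm]
  by_cases he : e ≤ n
  · rw [if_pos he]
    by_cases hr : n - e ∈ Finset.range (g.totalDegree + 1)
    · rw [Finset.sum_eq_single (n - e)]
      · rw [if_pos (by omega)]
      · intro b _ hb
        rw [if_neg (by omega)]
      · intro hb
        exact absurd hr hb
    · simp only [Finset.mem_range, not_lt] at hr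
      have hz : homogeneousComponent (n - e) g = 0 :=
        homogeneousComponent_eq_zero _ _ (by omega)
      rw [hz, mul_zero, Finset.sum_eq_zero]
      intro i hi
      simp only [Finset.mem_range] at hi
      rw [if_neg (by omega)]
  · rw [if_neg he, Finset.sum_eq_zero]
    intro i hi
    rw [if_neg (by omega)]

lemma delta_ne_zero : ((X 0 : MvPolynomial (Fin 2) k) - X 1) ≠ 0 := by
  intro h
  have : coeff (mon 1 0) ((X 0 : MvPolynomial (Fin 2) k) - X 1) = 1 := by
    have := coeff_delta_pow (k := k) 1
    rwa [pow_one] at this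
  rw [h] at this
  simp at this

lemma delta_homog : ((X 0 : MvPolynomial (Fin 2) k) - X 1).IsHomogeneous 1 :=
  (isHomogeneous_X _ _).sub (isHomogeneous_X _ _)

lemma delta_pow_homog (n : ℕ) : (((X 0 : MvPolynomial (Fin 2) k) - X 1)^n).IsHomogeneous n := by
  have h := (delta_homog (k := k)).pow n
  rwa [one_mul] at h

-- dividing a homogeneous polynomial by δ^e
lemma factor_homog {F : MvPolynomial (Fin 2) k} {dd e : ℕ} (hF : F.IsHomogeneous dd)
    (hdvd : ((X 0 : MvPolynomial (Fin 2) k) - X 1)^e ∣ F) (he : e ≤ dd) :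
    ∃ g, g.IsHomogeneous (dd - e) ∧ F = ((X 0 : MvPolynomial (Fin 2) k) - X 1)^e * g := by
  obtain ⟨g0, rfl⟩ := hdvd
  refine ⟨homogeneousComponent (dd - e) g0, homogeneousComponent_isHomogeneous _ _, ?_⟩
  have h1 : homogeneousComponent dd (((X 0 : MvPolynomial (Fin 2) k) - X 1)^e * g0)
      = ((X 0 : MvPolynomial (Fin 2) k) - X 1)^e * g0 := by
    rw [homogeneousComponent_of_mem ((mem_homogeneousSubmodule _ _).2 hF), if_pos rfl]
  conv_lhs => rw [← h1]
  rw [hc_mul (delta_pow_homog e) g0 dd, if_pos he]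

lemma factor_zero {F : MvPolynomial (Fin 2) k} {dd e : ℕ} (hF : F.IsHomogeneous dd)
    (hdvd : ((X 0 : MvPolynomial (Fin 2) k) - X 1)^e ∣ F) (he : dd < e) :
    F = 0 := by
  obtain ⟨g0, rfl⟩ := hdvd
  have h1 : homogeneousComponent dd (((X 0 : MvPolynomial (Fin 2) k) - X 1)^e * g0)
      = ((X 0 : MvPolynomial (Fin 2) k) - X 1)^e * g0 := by
    rw [homogeneousComponent_of_mem ((mem_homogeneousSubmodule _ _).2 hF), if_pos rfl]
  conv_lhs => rw [← h1]
  rw [hc_mul (delta_pow_homog e) g0 dd, if_neg (by omega)]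

-- linearity helpers for sP
lemma sP_sub (F G : MvPolynomial (Fin 2) k) : sP (F - G) = sP F - sP G :=
  map_sub (rename (Equiv.swap (0:Fin 2) 1)) F G
lemma sP_add (F G : MvPolynomial (Fin 2) k) : sP (F + G) = sP F + sP G :=
  map_add (rename (Equiv.swap (0:Fin 2) 1)) F G
lemma sP_smul (c : k) (F : MvPolynomial (Fin 2) k) : sP (c • F) = c • sP F :=
  (rename (Equiv.swap (0:Fin 2) 1)).toLinearMap.map_smul c F
lemma sP_sum {ι : Type*} (s : Finset ι) (f : ι → MvPolynomial (Fin 2) k) :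
    sP (∑ i ∈ s, f i) = ∑ i ∈ s, sP (f i) :=
  map_sum (rename (Equiv.swap (0:Fin 2) 1)) f s
lemma sP_homog {F : MvPolynomial (Fin 2) k} {n : ℕ} (h : F.IsHomogeneous n) :
    (sP F).IsHomogeneous n := h.rename_isHomogeneous

-- the symmetric basis elements
noncomputable def u (dd a : ℕ) : MvPolynomial (Fin 2) k :=
  if 2*a = dd then monomial (mon a a) 1
  else monomial (mon (dd - a) a) 1 + monomial (mon a (dd - a)) 1

lemma u_symm (dd a : ℕ) : sP (u dd a : MvPolynomial (Fin 2) k) = u dd a := by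
  unfold u
  split_ifs with h
  · rw [sP_monomial]
  · rw [sP_add, sP_monomial, sP_monomial, add_comm]

lemma u_homog {dd a : ℕ} (h : a ≤ dd) : (u dd a : MvPolynomial (Fin 2) k).IsHomogeneous dd := by
  unfold u
  split_ifs with h1
  · exact isHomogeneous_monomial _ (by rw [degree_mon]; omega)
  · exact (isHomogeneous_monomial _ (by rw [degree_mon]; omega)).add
      (isHomogeneous_monomial _ (by rw [degree_mon]; omega))

lemma u_mem_homog {dd a : ℕ} (h : a ≤ dd) :
    (u dd a : MvPolynomial (Fin 2) k) ∈ homogeneousSubmodule (Fin 2) k dd :=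
  (mem_homogeneousSubmodule _ _).2 (u_homog h)

lemma coeff_u {dd a a' : ℕ} (ha : 2*a ≤ dd) (ha' : 2*a' ≤ dd) :
    coeff (mon (dd - a) a) (u dd a' : MvPolynomial (Fin 2) k) = if a = a' then 1 else 0 := by
  classical
  unfold u
  split_ifs with h1 h2 h2
  · rw [coeff_monomial, if_pos (mon_inj.2 ⟨by omega, by omega⟩)]
  · rw [coeff_monomial, if_neg]
    intro h
    obtain ⟨hh1, hh2⟩ := mon_inj.1 h
    omega
  · rw [coeff_add, coeff_monomial, coeff_monomial, if_pos (mon_inj.2 ⟨by omega, by omega⟩),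
      if_neg]
    · rw [add_zero]
    · intro h
      obtain ⟨hh1, hh2⟩ := mon_inj.1 h
      omega
  · rw [coeff_add, coeff_monomial, coeff_monomial, if_neg, if_neg, add_zero]
    · intro h
      obtain ⟨hh1, hh2⟩ := mon_inj.1 h
      omega
    · intro h
      obtain ⟨hh1, hh2⟩ := mon_inj.1 h
      omega

-- every symmetric homogeneous polynomial lies in the span of the `u`s
set_option maxHeartbeats 1000000 in
lemma symm_span {D : ℕ} {F : MvPolynomial (Fin 2) k} (hF : F.IsHomogeneous D) (hs : sP F = F) :
    F ∈ Submodule.span k (Set.range (fun a : Fin (D/2+1) => (u D (a:ℕ) : MvPolynomial (Fin 2) k))) := by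
  classical
  set G : MvPolynomial (Fin 2) k :=
    ∑ a : Fin (D/2+1), coeff (mon (D - (a:ℕ)) (a:ℕ)) F • (u D (a:ℕ) : MvPolynomial (Fin 2) k)
    with hG
  have hGmem : G ∈ Submodule.span k
      (Set.range (fun a : Fin (D/2+1) => (u D (a:ℕ) : MvPolynomial (Fin 2) k))) := by
    apply Submodule.sum_mem
    intro a _
    exact Submodule.smul_mem _ _ (Submodule.subset_span ⟨a, rfl⟩)
  have hGhomog : G ∈ homogeneousSubmodule (Fin 2) k D := by
    apply Submodule.sum_mem
    intro a _
    exact Submodule.smul_mem _ _ (u_mem_homog (by have := a.isLt; omega))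
  have hGsymm : sP G = G := by
    rw [hG, sP_sum]
    congr 1
    funext a
    rw [sP_smul, u_symm]
  have hcoeffG : ∀ a : Fin (D/2+1),
      coeff (mon (D - (a:ℕ)) (a:ℕ)) G = coeff (mon (D - (a:ℕ)) (a:ℕ)) F := by
    intro a
    rw [hG, coeff_sum, Finset.sum_eq_single a]
    · rw [coeff_smul, coeff_u (by have := a.isLt; omega) (by have := a.isLt; omega),
        if_pos rfl, smul_eq_mul, mul_one]
    · intro b _ hb
      rw [coeff_smul, coeff_u (by have := a.isLt; omega) (by have := b.isLt; omega),
        if_neg (fun h => hb (Fin.ext h.symm)), smul_eq_mul, mul_zero]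
    · intro h
      exact absurd (Finset.mem_univ a) h
  have key : F - G = 0 := by
    apply eq_zero_of_coeffs ((mem_homogeneousSubmodule _ _).1
      (Submodule.sub_mem _ ((mem_homogeneousSubmodule _ _).2 hF) hGhomog))
    intro i hi
    by_cases hcase : 2*i ≥ D
    · have ha : i = D - (D - i) := by omega
      have := hcoeffG ⟨D - i, by omega⟩
      simp only [coeff_sub]
      rw [show mon i (D - i) = mon (D - (D-i)) (D-i) from mon_inj.2 ⟨by omega, by omega⟩]
      simp only at this
      rw [this]
      ring
    · have hsymmFG : sP (F - G) = F - G := by rw [sP_sub, hs, hGsymm]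
      rw [coeff_symm hsymmFG]
      have := hcoeffG ⟨i, by omega⟩
      simp only [coeff_sub]
      rw [show mon (D - i) i = mon (D - i) i from rfl]
      simp only at this
      rw [this]
      ring
  have : F = G := by rwa [sub_eq_zero] at key
  rw [this]
  exact hGmem

-- the quasi-invariant generators
noncomputable def v (m dd a : ℕ) : MvPolynomial (Fin 2) k :=
  ((X 0 - X 1)^(2*m)) * (X 0)^(dd - 2*m - 2*a) * ((X 0) * (X 1))^a

noncomputable def w (m dd a : ℕ) : MvPolynomial (Fin 2) k :=
  ((X 0 - X 1)^(2*m)) * ((X 0)^(dd - 2*m - 2*a) - (X 1)^(dd - 2*m - 2*a)) * ((X 0) * (X 1))^a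

lemma v_homog {m dd a : ℕ} (h : 2*m + 2*a ≤ dd) :
    (v m dd a : MvPolynomial (Fin 2) k).IsHomogeneous dd := by
  have h1 := ((delta_pow_homog (k := k) (2*m)).mul
      (isHomogeneous_X_pow 0 (dd - 2*m - 2*a))).mul
      (((isHomogeneous_X k 0).mul (isHomogeneous_X k 1)).pow a)
  rw [show 2*m + (dd - 2*m - 2*a) + (1+1)*a = dd from by omega] at h1
  exact h1

lemma w_homog {m dd a : ℕ} (h : 2*m + 2*a ≤ dd) :
    (w m dd a : MvPolynomial (Fin 2) k).IsHomogeneous dd := by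
  have h1 := ((delta_pow_homog (k := k) (2*m)).mul
      ((isHomogeneous_X_pow 0 (dd - 2*m - 2*a)).sub (isHomogeneous_X_pow 1 (dd - 2*m - 2*a)))).mul
      (((isHomogeneous_X k 0).mul (isHomogeneous_X k 1)).pow a)
  rw [show 2*m + (dd - 2*m - 2*a) + (1+1)*a = dd from by omega] at h1
  exact h1

lemma sP_v (m dd a : ℕ) : sP (v m dd a : MvPolynomial (Fin 2) k)
    = ((X 0 - X 1)^(2*m)) * (X 1)^(dd - 2*m - 2*a) * ((X 0) * (X 1))^a := by
  unfold v sP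
  simp only [map_mul, map_pow, map_sub, rename_X, Equiv.swap_apply_left, Equiv.swap_apply_right]
  have hneg : ((X 1 : MvPolynomial (Fin 2) k) - X 0)^(2*m)
      = ((X 0 : MvPolynomial (Fin 2) k) - X 1)^(2*m) := by
    rw [← neg_sub (X 0 : MvPolynomial (Fin 2) k) (X 1), Even.neg_pow (even_two_mul m)]
  rw [hneg]
  ring

lemma psi_v (m dd a : ℕ) :
    (v m dd a : MvPolynomial (Fin 2) k) - sP (v m dd a) = w m dd a := by
  rw [sP_v, v, w]
  ring

lemma w_dvd (m dd a : ℕ) :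
    ((X 0 : MvPolynomial (Fin 2) k) - X 1)^(2*m+1) ∣ (w m dd a : MvPolynomial (Fin 2) k) := by
  obtain ⟨q, hq⟩ := sub_dvd_pow_sub_pow (X 0 : MvPolynomial (Fin 2) k) (X 1) (dd - 2*m - 2*a)
  refine ⟨q * ((X 0) * (X 1))^a, ?_⟩
  rw [w, hq]
  ring

-- coefficient computations for the w family
lemma coeff_w_lt {m dd a a' : ℕ} (h : a < a') :
    coeff (mon (dd - a) a) (w m dd a' : MvPolynomial (Fin 2) k) = 0 := by
  apply coeff_mul_X0X1_pow_eq_zero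
  simpa using h

lemma coeff_w_eq {m dd a : ℕ} (h1 : 2*m + 2*a < dd) :
    coeff (mon (dd - a) a) (w m dd a : MvPolynomial (Fin 2) k) = 1 := by
  have hsplit : mon (dd - a) a = mon (2*m + (dd - 2*m - 2*a)) 0 + mon a a := by
    rw [mon_add_mon]; exact mon_inj.2 ⟨by omega, by omega⟩
  rw [w, X0X1_pow, hsplit, coeff_mul_monomial, mul_one, mul_sub, coeff_sub]
  have hx1 : coeff (mon (2*m + (dd - 2*m - 2*a)) 0)
      (((X 0 : MvPolynomial (Fin 2) k) - X 1)^(2*m) * (X 1)^(dd - 2*m - 2*a)) = 0 := by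
    apply coeff_mul_X1_pow_eq_zero
    simp only [mon_apply_one]
    omega
  have hx0 : coeff (mon (2*m + (dd - 2*m - 2*a)) 0)
      (((X 0 : MvPolynomial (Fin 2) k) - X 1)^(2*m) * (X 0)^(dd - 2*m - 2*a)) = 1 := by
    rw [X0_pow, show mon (2*m + (dd - 2*m - 2*a)) 0 = mon (2*m) 0 + mon (dd - 2*m - 2*a) 0
      from by rw [mon_add_mon], coeff_mul_monomial, coeff_delta_pow, mul_one]
  rw [hx0, hx1, sub_zero]

-- membership in the quasi-invariant submodule
lemma mem_Q_iff {m d : ℕ} {F : MvPolynomial (Fin 2) k} :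
    F ∈ quasiInvariantSubmodule k 2 m d ↔
      F.IsHomogeneous d ∧
        ((X 0 : MvPolynomial (Fin 2) k) - X 1)^(2*m+1) ∣ (F - sP F) := by
  rw [quasiInvariantSubmodule, Submodule.mem_inf, mem_homogeneousSubmodule]
  apply and_congr Iff.rfl
  simp only [Submodule.mem_iInf, Submodule.mem_comap, LinearMap.sub_apply, LinearMap.id_apply,
    AlgHom.toLinearMap_apply, Submodule.restrictScalars_mem, Ideal.mem_span_singleton]
  constructor
  · intro h
    exact h 0 1 (by decide)
  · intro h i j hij
    have hi : i = 0 ∧ j = 1 := by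
      have h2 : (i : ℕ) < (j : ℕ) := hij
      have := i.isLt
      have := j.isLt
      constructor <;> (apply Fin.ext; omega)
    rw [hi.1, hi.2]
    exact h

lemma v_mem_Q {m d a : ℕ} (h : 2*m + 2*a < d) :
    (v m d a : MvPolynomial (Fin 2) k) ∈ quasiInvariantSubmodule k 2 m d := by
  rw [mem_Q_iff]
  refine ⟨v_homog (by omega), ?_⟩
  rw [psi_v]
  exact w_dvd m d a

lemma u_mem_Q {m d a : ℕ} (h : a ≤ d) :
    (u d a : MvPolynomial (Fin 2) k) ∈ quasiInvariantSubmodule k 2 m d := by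
  rw [mem_Q_iff]
  refine ⟨u_homog h, ?_⟩
  rw [u_symm, sub_self]
  exact dvd_zero _

lemma u_X_form {D a : ℕ} (h : 2*a < D) :
    (u D a : MvPolynomial (Fin 2) k)
      = ((X 0) * (X 1))^a * ((X 0)^(D - 2*a) + (X 1)^(D - 2*a)) := by
  rw [u, if_neg (by omega), X0X1_pow, X0_pow, X1_pow, mul_add, monomial_mul, monomial_mul,
    mon_add_mon, mon_add_mon, mul_one]
  rw [show a + (D - 2*a) = D - a from by omega, show a + 0 = a from by omega]

lemma u_diag_form {D a : ℕ} (h : 2*a = D) :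
    (u D a : MvPolynomial (Fin 2) k) = ((X 0) * (X 1))^a := by
  rw [u, if_pos h, X0X1_pow]

lemma delta_u_in_psi_span {m d : ℕ} (h2 : 2*m+1 ≤ d) {a : ℕ} (ha : 2*a ≤ d - (2*m+1)) :
    ∃ G ∈ Submodule.span k (Set.range
      (fun a : Fin ((d-(2*m+1))/2+1) => (v m d (a:ℕ) : MvPolynomial (Fin 2) k))),
      G - sP G = ((X 0 - X 1)^(2*m+1)) * u (d-(2*m+1)) a := by
  by_cases hb0 : 2*a = d-(2*m+1)
  · refine ⟨v m d a, Submodule.subset_span ⟨⟨a, by omega⟩, rfl⟩, ?_⟩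
    rw [psi_v, w, u_diag_form hb0, show d - 2*m - 2*a = 1 from by omega]
    ring
  · by_cases hb1 : 2*a + 1 = d-(2*m+1)
    · refine ⟨v m d a, Submodule.subset_span ⟨⟨a, by omega⟩, rfl⟩, ?_⟩
      rw [psi_v, w, u_X_form (by omega), show d - 2*m - 2*a = 1 + 1 from by omega,
        show d - (2*m+1) - 2*a = 1 from by omega]
      ring
    · refine ⟨v m d a - v m d (a+1), Submodule.sub_mem _
        (Submodule.subset_span ⟨⟨a, by omega⟩, rfl⟩)
        (Submodule.subset_span ⟨⟨a+1, by omega⟩, rfl⟩), ?_⟩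
      have h1 := psi_v (k := k) m d a
      have h2' := psi_v (k := k) m d (a+1)
      have hψ : (v m d a - v m d (a+1) : MvPolynomial (Fin 2) k)
          - sP (v m d a - v m d (a+1)) = w m d a - w m d (a+1) := by
        rw [sP_sub]
        linear_combination h1 - h2'
      rw [hψ, w, w, u_X_form (by omega)]
      obtain ⟨e, he⟩ : ∃ e, d - (2*m+1) - 2*a - 2 = e := ⟨_, rfl⟩
      rw [show d - 2*m - 2*a = e + 3 from by omega,
        show d - 2*m - 2*(a+1) = e + 1 from by omega,
        show d - (2*m+1) - 2*a = e + 2 from by omega]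
      ring

lemma sP_mul (F G : MvPolynomial (Fin 2) k) : sP (F * G) = sP F * sP G :=
  map_mul (rename (Equiv.swap (0:Fin 2) 1)) F G
lemma sP_pow (F : MvPolynomial (Fin 2) k) (n : ℕ) : sP (F^n) = (sP F)^n :=
  map_pow (rename (Equiv.swap (0:Fin 2) 1)) F n
lemma sP_zero : sP (0 : MvPolynomial (Fin 2) k) = 0 :=
  map_zero (rename (Equiv.swap (0:Fin 2) 1))
lemma sP_delta : sP ((X 0 : MvPolynomial (Fin 2) k) - X 1) = -((X 0) - (X 1)) := by
  rw [sP_sub, sP_X0, sP_X1]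
  ring

lemma delta_span {m d : ℕ} (h2 : 2*m+1 ≤ d) {g : MvPolynomial (Fin 2) k}
    (hgspan : g ∈ Submodule.span k (Set.range
      (fun a : Fin ((d-(2*m+1))/2+1) => (u (d-(2*m+1)) (a:ℕ) : MvPolynomial (Fin 2) k)))) :
    ∃ G ∈ Submodule.span k (Set.range
      (fun a : Fin ((d-(2*m+1))/2+1) => (v m d (a:ℕ) : MvPolynomial (Fin 2) k))),
      G - sP G = ((X 0 - X 1)^(2*m+1)) * g := by
  induction hgspan using Submodule.span_induction with
  | mem x hx =>
    obtain ⟨aa, rfl⟩ := hx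
    exact delta_u_in_psi_span h2 (by have := aa.isLt; omega)
  | zero =>
    exact ⟨0, Submodule.zero_mem _, by rw [sP_zero, mul_zero, sub_zero]⟩
  | add x y hx hy ihx ihy =>
    obtain ⟨G1, hG1, hG1eq⟩ := ihx
    obtain ⟨G2, hG2, hG2eq⟩ := ihy
    exact ⟨G1 + G2, Submodule.add_mem _ hG1 hG2, by
      rw [sP_add]; linear_combination hG1eq + hG2eq⟩
  | smul c x hx ih =>
    obtain ⟨G1, hG1, hG1eq⟩ := ih
    refine ⟨c • G1, Submodule.smul_mem _ _ hG1, ?_⟩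
    rw [sP_smul, ← smul_sub, hG1eq, smul_eq_C_mul, smul_eq_C_mul]
    ring

lemma Q_eq_span_pos {m d : ℕ} (h2 : 2*m+1 ≤ d) :
    quasiInvariantSubmodule k 2 m d = Submodule.span k (Set.range (Sum.elim
      (fun a : Fin (d/2+1) => (u d (a:ℕ) : MvPolynomial (Fin 2) k))
      (fun a : Fin ((d-(2*m+1))/2+1) => v m d (a:ℕ)))) := by
  apply le_antisymm
  · intro F hF
    rw [mem_Q_iff] at hF
    obtain ⟨hH, hdvd⟩ := hF
    have hψhom : (F - sP F).IsHomogeneous d := hH.sub (sP_homog hH)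
    obtain ⟨g, hg, heq⟩ := factor_homog hψhom hdvd h2
    -- g is symmetric
    have hsg : sP g = g := by
      have hA : sP (F - sP F) = -(F - sP F) := by rw [sP_sub, sP_sP]; ring
      rw [heq] at hA
      rw [sP_mul, sP_pow, sP_delta, Odd.neg_pow (odd_two_mul_add_one m), neg_mul] at hA
      exact mul_left_cancel₀ (pow_ne_zero _ (delta_ne_zero (k := k))) (neg_inj.1 hA)
    have hgspan := symm_span hg hsg
    obtain ⟨G, hGspan, hGeq⟩ := delta_span h2 hgspan
    have hGhom : G ∈ homogeneousSubmodule (Fin 2) k d := by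
      have hle : Submodule.span k (Set.range
          (fun a : Fin ((d-(2*m+1))/2+1) => (v m d (a:ℕ) : MvPolynomial (Fin 2) k)))
          ≤ homogeneousSubmodule (Fin 2) k d := by
        rw [Submodule.span_le]
        rintro x ⟨aa, rfl⟩
        exact (mem_homogeneousSubmodule _ _).2 (v_homog (by have := aa.isLt; omega))
      exact hle hGspan
    have hFG : sP (F - G) = F - G := by
      have hz : (F - G) - sP (F - G) = 0 := by
        rw [sP_sub]
        linear_combination heq - hGeq
      have := sub_eq_zero.1 hz
      exact this.symm
    have hFGhom : (F - G).IsHomogeneous d := hH.sub ((mem_homogeneousSubmodule _ _).1 hGhom)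
    have hFGspan := symm_span hFGhom hFG
    have hsplitF : F = (F - G) + G := by ring
    rw [hsplitF]
    apply Submodule.add_mem
    · refine Submodule.span_mono ?_ hFGspan
      rintro x ⟨a, rfl⟩
      exact ⟨Sum.inl a, rfl⟩
    · refine Submodule.span_mono ?_ hGspan
      rintro x ⟨a, rfl⟩
      exact ⟨Sum.inr a, rfl⟩
  · rw [Submodule.span_le]
    rintro x ⟨i, rfl⟩
    cases i with
    | inl a => exact u_mem_Q (by have := a.isLt; omega)
    | inr a => exact v_mem_Q (by have := a.isLt; omega)

lemma Q_eq_span_neg {m d : ℕ} (h2 : ¬ (2*m+1 ≤ d)) :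
    quasiInvariantSubmodule k 2 m d = Submodule.span k (Set.range
      (fun a : Fin (d/2+1) => (u d (a:ℕ) : MvPolynomial (Fin 2) k))) := by
  apply le_antisymm
  · intro F hF
    rw [mem_Q_iff] at hF
    obtain ⟨hH, hdvd⟩ := hF
    have hψhom : (F - sP F).IsHomogeneous d := hH.sub (sP_homog hH)
    have h0 : F - sP F = 0 := factor_zero hψhom hdvd (by omega)
    have hs : sP F = F := (sub_eq_zero.1 h0).symm
    exact symm_span hH hs
  · rw [Submodule.span_le]
    rintro x ⟨a, rfl⟩
    exact u_mem_Q (by have := a.isLt; omega)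

lemma indep_neg {d : ℕ} :
    LinearIndependent k (fun a : Fin (d/2+1) => (u d (a:ℕ) : MvPolynomial (Fin 2) k)) := by
  classical
  rw [Fintype.linearIndependent_iff]
  intro g hsum a
  have hc := congrArg (coeff (mon (d - (a:ℕ)) (a:ℕ))) hsum
  rw [coeff_sum, coeff_zero] at hc
  rw [Finset.sum_eq_single a] at hc
  · rwa [coeff_smul, coeff_u (by have := a.isLt; omega) (by have := a.isLt; omega),
      if_pos rfl, smul_eq_mul, mul_one] at hc
  · intro b _ hb
    rw [coeff_smul, coeff_u (by have := a.isLt; omega) (by have := b.isLt; omega),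
      if_neg (fun h => hb (Fin.ext h.symm)), smul_eq_mul, mul_zero]
  · intro h; exact absurd (Finset.mem_univ a) h

lemma indep_pos {m d : ℕ} (h2 : 2*m+1 ≤ d) :
    LinearIndependent k (Sum.elim
      (fun a : Fin (d/2+1) => (u d (a:ℕ) : MvPolynomial (Fin 2) k))
      (fun a : Fin ((d-(2*m+1))/2+1) => (v m d (a:ℕ) : MvPolynomial (Fin 2) k))) := by
  classical
  rw [Fintype.linearIndependent_iff]
  intro g hsum
  have hψ : ∑ i : Fin (d/2+1) ⊕ Fin ((d-(2*m+1))/2+1),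
      (g i • (Sum.elim (fun a : Fin (d/2+1) => (u d (a:ℕ) : MvPolynomial (Fin 2) k))
        (fun a : Fin ((d-(2*m+1))/2+1) => (v m d (a:ℕ) : MvPolynomial (Fin 2) k)) i
        - sP (Sum.elim (fun a : Fin (d/2+1) => (u d (a:ℕ) : MvPolynomial (Fin 2) k))
        (fun a : Fin ((d-(2*m+1))/2+1) => (v m d (a:ℕ) : MvPolynomial (Fin 2) k)) i))) = 0 := by
    have h0 := congrArg (fun F : MvPolynomial (Fin 2) k => F - sP F) hsum
    simp only [sP_zero, sub_zero] at h0
    rw [sP_sum] at h0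
    calc ∑ i, (g i • (Sum.elim (fun a : Fin (d/2+1) => (u d (a:ℕ) : MvPolynomial (Fin 2) k))
        (fun a : Fin ((d-(2*m+1))/2+1) => (v m d (a:ℕ) : MvPolynomial (Fin 2) k)) i
        - sP (Sum.elim (fun a : Fin (d/2+1) => (u d (a:ℕ) : MvPolynomial (Fin 2) k))
        (fun a : Fin ((d-(2*m+1))/2+1) => (v m d (a:ℕ) : MvPolynomial (Fin 2) k)) i)))
        = ∑ i, (g i • Sum.elim (fun a : Fin (d/2+1) => (u d (a:ℕ) : MvPolynomial (Fin 2) k))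
            (fun a : Fin ((d-(2*m+1))/2+1) => (v m d (a:ℕ) : MvPolynomial (Fin 2) k)) i
          - sP (g i • Sum.elim (fun a : Fin (d/2+1) => (u d (a:ℕ) : MvPolynomial (Fin 2) k))
            (fun a : Fin ((d-(2*m+1))/2+1) => (v m d (a:ℕ) : MvPolynomial (Fin 2) k)) i)) :=
          Finset.sum_congr rfl (fun i _ => by rw [sP_smul, smul_sub])
      _ = _ := Finset.sum_sub_distrib _ _
      _ = 0 := h0
  have hWsum : ∑ a : Fin ((d-(2*m+1))/2+1),
      g (Sum.inr a) • (w m d (a:ℕ) : MvPolynomial (Fin 2) k) = 0 := by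
    rw [Fintype.sum_sum_type] at hψ
    have hzero : ∑ a : Fin (d/2+1),
        g (Sum.inl a) • ((u d (a:ℕ) : MvPolynomial (Fin 2) k) - sP (u d (a:ℕ))) = 0 :=
      Finset.sum_eq_zero (fun a _ => by rw [u_symm, sub_self, smul_zero])
    simp only [Sum.elim_inl, Sum.elim_inr] at hψ
    rw [hzero, zero_add] at hψ
    rw [← hψ]
    exact Finset.sum_congr rfl (fun a _ => by rw [psi_v])
  have hinr : ∀ n, ∀ a : Fin ((d-(2*m+1))/2+1), (a:ℕ) = n → g (Sum.inr a) = 0 := by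
    intro n
    induction n using Nat.strong_induction_on with
    | _ n ih =>
      intro a han
      have hc := congrArg (coeff (mon (d - (a:ℕ)) (a:ℕ))) hWsum
      rw [coeff_sum, coeff_zero] at hc
      rw [Finset.sum_eq_single a] at hc
      · rwa [coeff_smul, coeff_w_eq (by have := a.isLt; omega), smul_eq_mul, mul_one] at hc
      · intro b _ hb
        rcases lt_trichotomy ((b:ℕ)) ((a:ℕ)) with hlt | heqq | hgt
        · rw [ih (b:ℕ) (by omega) b rfl, zero_smul, coeff_zero]
        · exact absurd (Fin.ext heqq) hb
        · rw [coeff_smul, coeff_w_lt hgt, smul_zero]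
      · intro h; exact absurd (Finset.mem_univ a) h
  have hUsum : ∑ a : Fin (d/2+1),
      g (Sum.inl a) • (u d (a:ℕ) : MvPolynomial (Fin 2) k) = 0 := by
    rw [Fintype.sum_sum_type] at hsum
    have hz2 : ∑ a : Fin ((d-(2*m+1))/2+1), g (Sum.inr a) •
        (Sum.elim (fun a : Fin (d/2+1) => (u d (a:ℕ) : MvPolynomial (Fin 2) k))
          (fun a : Fin ((d-(2*m+1))/2+1) => (v m d (a:ℕ) : MvPolynomial (Fin 2) k))
          (Sum.inr a)) = 0 :=
      Finset.sum_eq_zero (fun a _ => by rw [hinr (a:ℕ) a rfl, zero_smul])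
    rw [hz2, add_zero] at hsum
    simpa only [Sum.elim_inl] using hsum
  have hinl : ∀ a : Fin (d/2+1), g (Sum.inl a) = 0 := by
    intro a
    have hc := congrArg (coeff (mon (d - (a:ℕ)) (a:ℕ))) hUsum
    rw [coeff_sum, coeff_zero] at hc
    rw [Finset.sum_eq_single a] at hc
    · rwa [coeff_smul, coeff_u (by have := a.isLt; omega) (by have := a.isLt; omega),
        if_pos rfl, smul_eq_mul, mul_one] at hc
    · intro b _ hb
      rw [coeff_smul, coeff_u (by have := a.isLt; omega) (by have := b.isLt; omega),
        if_neg (fun h => hb (Fin.ext h.symm)), smul_eq_mul, mul_zero]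
    · intro h; exact absurd (Finset.mem_univ a) h
  intro i
  cases i with
  | inl a => exact hinl a
  | inr a => exact hinr (a:ℕ) a rfl

set_option maxHeartbeats 2000000 in
theorem finrank_Q (k : Type*) [Field k] (m d : ℕ) :
    Module.finrank k (quasiInvariantSubmodule k 2 m d)
      = d/2 + 1 + (if 2*m+1 ≤ d then (d-(2*m+1))/2 + 1 else 0) := by
  by_cases h2 : 2*m+1 ≤ d
  · rw [Q_eq_span_pos h2, finrank_span_eq_card (indep_pos h2), if_pos h2]
    simp
  · rw [Q_eq_span_neg h2, finrank_span_eq_card (indep_neg), if_neg h2]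
    simp

end QI

/-- for a prime `p` and integers `m, d ≥ 0`, the dimension of `Q_{m,d}(2)`
over `𝔽_p` equals the dimension over `ℂ`. -/
theorem stmt3 (p : ℕ) (hp : p.Prime) [Fact p.Prime] (m d : ℕ) :
    Module.finrank (ZMod p) (quasiInvariantSubmodule (ZMod p) 2 m d)
      = Module.finrank ℂ (quasiInvariantSubmodule ℂ 2 m d) := by
  rw [QI.finrank_Q, QI.finrank_Q]
end

section
/- Let k be any field and m ≥ 0, d ≥ 0 integers. Then dim_k Q_{m,d}(2) = ⌊d/2⌋ + 1 if d < 2m+1, and dim_k Q_{m,d}(2) = ⌊d/2⌋ + ⌊(d − 2m − 1)/2⌋ + 2 if d ≥ 2m+1; equivalently, the Hilbert series of Q_m(2) over every field equals (1 + t^{2m+1})/((1 − t)(1 − t^2)). -/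
open MvPolynomial

namespace QIProof

open Finset


variable {k : Type*} [Field k]

/-- The exponent vector `(a, b)` for two variables. -/
noncomputable def fn2 (a b : ℕ) : Fin 2 →₀ ℕ := Finsupp.single 0 a + Finsupp.single 1 b

@[simp] lemma fn2_apply0 (a b : ℕ) : fn2 a b 0 = a := by
  simp [fn2, Finsupp.single_apply]

@[simp] lemma fn2_apply1 (a b : ℕ) : fn2 a b 1 = b := by
  simp [fn2, Finsupp.single_apply]

lemma fn2_eq_iff {a b a' b' : ℕ} : fn2 a b = fn2 a' b' ↔ a = a' ∧ b = b' := by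
  constructor
  · intro h
    constructor
    · have := congrArg (fun u => u 0) h; simpa using this
    · have := congrArg (fun u => u 1) h; simpa using this
  · rintro ⟨rfl, rfl⟩; rfl

lemma eq_fn2 (u : Fin 2 →₀ ℕ) : u = fn2 (u 0) (u 1) := by
  ext i
  fin_cases i <;> simp

lemma degree_eq (u : Fin 2 →₀ ℕ) : u.degree = u 0 + u 1 := by
  rw [Finsupp.degree_apply, Finset.sum_subset (Finset.subset_univ u.support)
    (by intro x _ hx; simpa using Finsupp.notMem_support_iff.mp hx), Fin.sum_univ_two]

@[simp] lemma fn2_degree (a b : ℕ) : (fn2 a b).degree = a + b := by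
  rw [degree_eq]; simp

lemma mapDomain_swap (a b : ℕ) :
    Finsupp.mapDomain (Equiv.swap (0 : Fin 2) 1) (fn2 a b) = fn2 b a := by
  simp [fn2, Finsupp.mapDomain_add, Finsupp.mapDomain_single, Equiv.swap_apply_left,
    Equiv.swap_apply_right, add_comm]

/-- The swap algebra map. -/
noncomputable def sw : MvPolynomial (Fin 2) k →ₐ[k] MvPolynomial (Fin 2) k :=
  rename (Equiv.swap (0 : Fin 2) 1)

lemma sw_monomial (a b : ℕ) (c : k) :
    sw (monomial (fn2 a b) c) = monomial (fn2 b a) c := by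
  unfold sw; rw [rename_monomial, mapDomain_swap]

lemma coeff_sw (a b : ℕ) (F : MvPolynomial (Fin 2) k) :
    coeff (fn2 a b) (sw F) = coeff (fn2 b a) F := by
  unfold sw; rw [← mapDomain_swap b a, coeff_rename_mapDomain _ (Equiv.swap _ _).injective]

lemma sw_sw (F : MvPolynomial (Fin 2) k) : sw (sw F) = F := by
  unfold sw; rw [rename_rename]
  have : (Equiv.swap (0:Fin 2) 1) ∘ (Equiv.swap (0:Fin 2) 1) = id := by
    funext x; simp
  rw [this, rename_id, AlgHom.id_apply]

lemma sw_isHomogeneous {F : MvPolynomial (Fin 2) k} {n : ℕ} (h : F.IsHomogeneous n) :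
    (sw F).IsHomogeneous n := h.rename_isHomogeneous


lemma neg_one_pow_sub {j n : ℕ} (h : j ≤ n) : (-1:k)^(n-j) = (-1)^n * (-1)^j := by
  have h1 : (-1:k)^(n-j) * (-1)^j = (-1)^n := by rw [← pow_add]; congr 1; omega
  have h2 : (-1:k)^j * (-1)^j = 1 := by
    rw [← pow_add, ← two_mul, pow_mul]; norm_num
  calc (-1:k)^(n-j) = (-1)^(n-j) * ((-1)^j * (-1)^j) := by rw [h2, mul_one]
    _ = ((-1)^(n-j) * (-1)^j) * (-1)^j := by ring
    _ = (-1)^n * (-1)^j := by rw [h1]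

/-- `X 0 - X 1`. -/
noncomputable def D : MvPolynomial (Fin 2) k := X 0 - X 1

lemma sw_D : sw (D : MvPolynomial (Fin 2) k) = -D := by
  unfold sw D
  rw [map_sub, rename_X, rename_X, Equiv.swap_apply_left, Equiv.swap_apply_right]
  ring

lemma D_isHomogeneous : (D : MvPolynomial (Fin 2) k).IsHomogeneous 1 :=
  (isHomogeneous_X k 0).sub (isHomogeneous_X k 1)

lemma D_pow_isHomogeneous (n : ℕ) : ((D : MvPolynomial (Fin 2) k)^n).IsHomogeneous n := by
  simpa using D_isHomogeneous.pow n

lemma D_ne_zero : (D : MvPolynomial (Fin 2) k) ≠ 0 := by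
  intro h
  have := congrArg (coeff (fn2 1 0)) h
  rw [D] at this
  have h1 : (fn2 1 0 : Fin 2 →₀ ℕ) = Finsupp.single 0 1 := by simp [fn2]
  simp [coeff_sub, coeff_X', h1, Finsupp.single_eq_single_iff] at this

lemma term_eq (a b : ℕ) (c : k) :
    C c * (X 0 : MvPolynomial (Fin 2) k)^a * (X 1)^b = monomial (fn2 a b) c := by
  rw [X_pow_eq_monomial, X_pow_eq_monomial, C_apply, monomial_mul, monomial_mul, fn2]
  simp

/-- coefficient in the expansion of `(X0 - X1)^n` -/
noncomputable def cf (n j : ℕ) : k := (-1:k)^(n-j) * ((n.choose j : ℕ) : k)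

lemma D_pow_eq (n : ℕ) : (D : MvPolynomial (Fin 2) k)^n
    = ∑ j ∈ range (n+1), monomial (fn2 j (n-j)) (cf n j) := by
  have hD : (D : MvPolynomial (Fin 2) k) = X 0 + (-X 1) := by rw [D]; ring
  rw [hD, add_pow]
  refine Finset.sum_congr rfl fun j hj => ?_
  rw [← term_eq, cf]
  rw [neg_pow]
  have hc : ((n.choose j : ℕ) : MvPolynomial (Fin 2) k) = C ((n.choose j : ℕ) : k) := by
    rw [C_eq_coe_nat]
  have hneg : ((-1 : MvPolynomial (Fin 2) k)) = C (-1 : k) := by simp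
  rw [hc, hneg, ← map_pow, map_mul]
  ring

/-- The basic quasi-invariant of degree `2m+1`: "half" of `(X0-X1)^(2m+1)`. -/
noncomputable def qq (m : ℕ) : MvPolynomial (Fin 2) k :=
  ∑ j ∈ Ico (m+1) (2*m+2), monomial (fn2 j (2*m+1-j)) (cf (2*m+1) j)

lemma qq_isHomogeneous (m : ℕ) : (qq m : MvPolynomial (Fin 2) k).IsHomogeneous (2*m+1) := by
  refine IsHomogeneous.sum _ _ _ fun j hj => isHomogeneous_monomial _ ?_
  rw [mem_Ico] at hj
  rw [fn2_degree]; omega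

lemma cf_compl (m j : ℕ) (h : j ≤ 2*m+1) :
    (cf (2*m+1) (2*m+1-j) : k) = - cf (2*m+1) j := by
  rw [cf, cf]
  have h1 : 2*m+1 - (2*m+1-j) = j := by omega
  rw [h1, Nat.choose_symm h]
  have h2 : (-1:k)^(2*m+1-j) = (-1)^(2*m+1) * (-1)^j := neg_one_pow_sub h
  have h3 : (-1:k)^(2*m+1) = -1 := Odd.neg_one_pow ⟨m, by ring⟩
  rw [h2, h3]
  ring

lemma sw_qq (m : ℕ) : sw (qq m : MvPolynomial (Fin 2) k)
    = - ∑ j ∈ Ico 0 (m+1), monomial (fn2 j (2*m+1-j)) (cf (2*m+1) j) := by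
  rw [qq, map_sum, ← Finset.sum_neg_distrib]
  refine Finset.sum_nbij' (fun j => 2*m+1-j) (fun j => 2*m+1-j) ?_ ?_ ?_ ?_ ?_
  · intro a ha; simp only [mem_Ico] at ha ⊢; omega
  · intro a ha; simp only [mem_Ico] at ha ⊢; omega
  · intro a ha; simp only [mem_Ico] at ha ⊢; omega
  · intro a ha; simp only [mem_Ico] at ha ⊢; omega
  · intro a ha
    simp only [mem_Ico] at ha
    have h1 : 2*m+1 - (2*m+1-a) = a := by omega
    rw [sw_monomial, h1, cf_compl m a (by omega), map_neg, neg_neg]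

lemma qq_sub_sw (m : ℕ) :
    (qq m : MvPolynomial (Fin 2) k) - sw (qq m) = D^(2*m+1) := by
  rw [sw_qq, sub_neg_eq_add, D_pow_eq, range_eq_Ico,
    ← Finset.sum_Ico_consecutive _ (Nat.zero_le (m+1)) (by omega : m+1 ≤ 2*m+1+1)]
  rw [qq, add_comm]


/-- Monomial symmetric polynomial in two variables. -/
noncomputable def msym (n a : ℕ) : MvPolynomial (Fin 2) k :=
  monomial (fn2 a (n-a)) 1 + if 2*a = n then 0 else monomial (fn2 (n-a) a) 1

lemma msym_isHomogeneous {n a : ℕ} (h : a ≤ n) :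
    (msym n a : MvPolynomial (Fin 2) k).IsHomogeneous n := by
  unfold msym
  refine IsHomogeneous.add (isHomogeneous_monomial _ (by rw [fn2_degree]; omega)) ?_
  split_ifs
  · exact isHomogeneous_zero _ _ _
  · exact isHomogeneous_monomial _ (by rw [fn2_degree]; omega)

lemma sw_msym {n a : ℕ} (h : 2*a ≤ n) :
    sw (msym n a : MvPolynomial (Fin 2) k) = msym n a := by
  unfold msym
  by_cases h2 : 2*a = n
  · have hna : n - a = a := by omega
    rw [if_pos h2, add_zero, sw_monomial, hna]
  · rw [if_neg h2, map_add, sw_monomial, sw_monomial, add_comm]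

lemma coeff_msym {n a b : ℕ} (ha : 2*a ≤ n) (hb : 2*b ≤ n) :
    coeff (fn2 b (n-b)) (msym n a : MvPolynomial (Fin 2) k) = if a = b then 1 else 0 := by
  have hiff : (fn2 a (n-a) = fn2 b (n-b)) ↔ a = b := by
    rw [fn2_eq_iff]
    exact ⟨fun h => h.1, fun h => ⟨h, by rw [h]⟩⟩
  unfold msym
  rw [coeff_add, coeff_monomial]
  by_cases h2 : 2*a = n
  · rw [if_pos h2, coeff_zero, add_zero, if_congr hiff rfl rfl]
  · have h0 : ¬ (fn2 (n-a) a = fn2 b (n-b)) := by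
      rw [fn2_eq_iff]; rintro ⟨e1, e2⟩; omega
    rw [if_neg h2, coeff_monomial, if_neg h0, add_zero, if_congr hiff rfl rfl]

lemma msym_indep {n : ℕ} (g : ℕ → k)
    (h : ∑ a ∈ range (n/2+1), g a • (msym n a : MvPolynomial (Fin 2) k) = 0) :
    ∀ b ∈ range (n/2+1), g b = 0 := by
  intro b hb
  rw [mem_range] at hb
  have hc := congrArg (coeff (fn2 b (n-b))) h
  rw [coeff_sum, coeff_zero] at hc
  rw [← hc, Finset.sum_eq_single b]
  · rw [coeff_smul, coeff_msym (by omega) (by omega), if_pos rfl, smul_eq_mul, mul_one]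
  · intro a ha hab
    rw [mem_range] at ha
    rw [coeff_smul, coeff_msym (by omega) (by omega), if_neg hab, smul_eq_mul, mul_zero]
  · intro hb'
    exact absurd (mem_range.mpr hb) hb'

lemma coeff_symm {F : MvPolynomial (Fin 2) k} (hs : sw F = F) (a b : ℕ) :
    coeff (fn2 b a) F = coeff (fn2 a b) F := by
  conv_lhs => rw [← hs]
  rw [coeff_sw]

lemma hom_rep {n : ℕ} {F : MvPolynomial (Fin 2) k} (hF : F.IsHomogeneous n) :
    F = ∑ a ∈ range (n+1), monomial (fn2 a (n-a)) (coeff (fn2 a (n-a)) F) := by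
  apply MvPolynomial.ext
  intro u
  rw [coeff_sum]
  by_cases hu : u 0 + u 1 = n
  · have hu0 : fn2 (u 0) (n - u 0) = u := by
      have : n - u 0 = u 1 := by omega
      rw [this, ← eq_fn2]
    rw [Finset.sum_eq_single (u 0)]
    · rw [coeff_monomial, if_pos hu0, hu0]
    · intro a ha hab
      rw [coeff_monomial, if_neg]
      intro hEq
      apply hab
      have := congrArg (fun v : Fin 2 →₀ ℕ => v 0) hEq
      simpa using this
    · intro h'
      exact absurd (mem_range.mpr (by omega)) h'
  · have h0 : coeff u F = 0 := hF.coeff_eq_zero (by rw [degree_eq u]; omega)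
    rw [h0]
    symm
    apply Finset.sum_eq_zero
    intro a ha
    rw [mem_range] at ha
    rw [coeff_monomial, if_neg]
    intro hEq
    apply hu
    have e0 : u 0 = a := by rw [← hEq]; simp
    have e1 : u 1 = n - a := by rw [← hEq]; simp
    omega

lemma symm_rep {n : ℕ} {F : MvPolynomial (Fin 2) k} (hF : F.IsHomogeneous n)
    (hs : sw F = F) :
    F = ∑ a ∈ range (n/2+1), coeff (fn2 a (n-a)) F • msym n a := by
  have hterm : ∀ a, coeff (fn2 a (n-a)) F • (msym n a : MvPolynomial (Fin 2) k)
      = monomial (fn2 a (n-a)) (coeff (fn2 a (n-a)) F)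
        + (if 2*a = n then 0 else monomial (fn2 (n-a) a) (coeff (fn2 a (n-a)) F)) := by
    intro a
    unfold msym
    rw [smul_add]
    congr 1
    · rw [smul_monomial, smul_eq_mul, mul_one]
    · split_ifs
      · rw [smul_zero]
      · rw [smul_monomial, smul_eq_mul, mul_one]
  rw [Finset.sum_congr rfl (fun a _ => hterm a), Finset.sum_add_distrib]
  have h2 : ∑ a ∈ range (n/2+1), (if 2*a = n then (0:MvPolynomial (Fin 2) k)
        else monomial (fn2 (n-a) a) (coeff (fn2 a (n-a)) F))
      = ∑ a ∈ range (n - n/2), monomial (fn2 (n-a) a) (coeff (fn2 a (n-a)) F) := by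
    rw [← Finset.sum_subset (Finset.range_subset_range.mpr (by omega : n - n/2 ≤ n/2+1))
      (fun a ha hna => by
        rw [mem_range] at ha
        rw [Finset.mem_range, not_lt] at hna
        rw [if_pos (by omega)])]
    apply Finset.sum_congr rfl
    intro a ha
    rw [mem_range] at ha
    rw [if_neg (by omega)]
  rw [h2]
  conv_lhs => rw [hom_rep hF]
  rw [range_eq_Ico,
    ← Finset.sum_Ico_consecutive _ (Nat.zero_le (n/2+1)) (by omega : n/2+1 ≤ n+1)]
  congr 1
  · rw [range_eq_Ico]
  refine Finset.sum_nbij' (fun a => n - a) (fun a => n - a) ?_ ?_ ?_ ?_ ?_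
  · intro a ha; simp only [mem_Ico, mem_range] at ha ⊢; omega
  · intro a ha; simp only [mem_Ico, mem_range] at ha ⊢; omega
  · intro a ha; simp only [mem_Ico] at ha; omega
  · intro a ha; simp only [mem_Ico, mem_range] at ha; omega
  · intro a ha
    simp only [mem_Ico] at ha
    have h1 : n - (n - a) = a := by omega
    rw [h1, coeff_symm hs]


/-- The second half of the basis: quasi-invariants with nonzero antisymmetric part. -/
noncomputable def NN (m e c : ℕ) : MvPolynomial (Fin 2) k :=
  if 2*c = e then monomial (fn2 c c) 1 * qq m else D^(2*m+1) * monomial (fn2 (e-c) c) 1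

lemma NN_isHomogeneous {m e c : ℕ} (hc : 2*c ≤ e) :
    (NN m e c : MvPolynomial (Fin 2) k).IsHomogeneous (e + (2*m+1)) := by
  unfold NN
  split_ifs with h
  · have h1 : (monomial (fn2 c c) (1:k)).IsHomogeneous e :=
      isHomogeneous_monomial _ (by rw [fn2_degree]; omega)
    exact h1.mul (qq_isHomogeneous m)
  · have h1 : (monomial (fn2 (e-c) c) (1:k)).IsHomogeneous e :=
      isHomogeneous_monomial _ (by rw [fn2_degree]; omega)
    have h2 := (D_pow_isHomogeneous (2*m+1) (k := k)).mul h1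
    rwa [add_comm (2*m+1) e] at h2

lemma NN_sub_sw {m e c : ℕ} (hc : 2*c ≤ e) :
    (NN m e c : MvPolynomial (Fin 2) k) - sw (NN m e c) = D^(2*m+1) * msym e c := by
  unfold NN
  split_ifs with h
  · rw [map_mul, sw_monomial, ← mul_sub, qq_sub_sw]
    unfold msym
    rw [if_pos h]
    have hec : e - c = c := by omega
    rw [hec, add_zero]
    ring
  · rw [map_mul, map_pow, sw_D, sw_monomial]
    have hodd : Odd (2*m+1) := ⟨m, by ring⟩
    rw [hodd.neg_pow]
    unfold msym
    rw [if_neg h]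
    ring

lemma mem_Q_iff {m d : ℕ} {F : MvPolynomial (Fin 2) k} :
    F ∈ quasiInvariantSubmodule k 2 m d ↔
      F.IsHomogeneous d ∧
        F - sw F ∈ Ideal.span {(D : MvPolynomial (Fin 2) k)^(2*m+1)} := by
  rw [quasiInvariantSubmodule, Submodule.mem_inf, mem_homogeneousSubmodule]
  apply and_congr Iff.rfl
  constructor
  · intro h
    have h1 := (Submodule.mem_iInf _).mp h 0
    have h2 := (Submodule.mem_iInf _).mp h1 1
    have h3 := (Submodule.mem_iInf _).mp h2 (by decide : (0:Fin 2) < 1)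
    rw [Submodule.mem_comap] at h3
    simpa [sw, D] using h3
  · intro h
    rw [Submodule.mem_iInf]; intro i
    rw [Submodule.mem_iInf]; intro j
    rw [Submodule.mem_iInf]; intro hij
    rw [Submodule.mem_comap]
    fin_cases i <;> fin_cases j <;>
      first
      | exact absurd hij (by decide)
      | simpa [sw, D] using h

lemma comp_vanish {p h : MvPolynomial (Fin 2) k} {r n : ℕ} (hp : p.IsHomogeneous r)
    (hph : (p * h).IsHomogeneous n) (i : ℕ) (hi : r + i ≠ n) :
    p * homogeneousComponent i h = 0 := by
  by_cases hle : i ≤ h.totalDegree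
  · have hcomp : homogeneousComponent (r+i) (p * h) = 0 := by
      rw [homogeneousComponent_of_mem ((mem_homogeneousSubmodule _ _).mpr hph),
        if_neg hi]
    have hrep : homogeneousComponent (r+i) (p * h)
        = ∑ i' ∈ range (h.totalDegree + 1),
            homogeneousComponent (r+i) (p * homogeneousComponent i' h) := by
      conv_lhs => rw [← sum_homogeneousComponent h]
      rw [Finset.mul_sum, map_sum]
    have hterm : ∀ i' ∈ range (h.totalDegree+1),
        homogeneousComponent (r+i) (p * homogeneousComponent i' h)
          = if i' = i then p * homogeneousComponent i' h else 0 := by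
      intro i' _
      rw [homogeneousComponent_of_mem ((mem_homogeneousSubmodule _ _).mpr
        (hp.mul (homogeneousComponent_isHomogeneous i' h)))]
      by_cases hii : i' = i
      · subst hii
        rw [if_pos rfl, if_pos rfl]
      · rw [if_neg (fun hc => hii (by omega)), if_neg hii]
    rw [Finset.sum_congr rfl hterm, Finset.sum_ite_eq' _ i
      (fun i' => p * homogeneousComponent i' h), if_pos (mem_range.mpr (by omega))] at hrep
    rw [← hrep, hcomp]
  · rw [homogeneousComponent_eq_zero _ _ (show h.totalDegree < i by omega), mul_zero]

lemma homog_factor {G h : MvPolynomial (Fin 2) k} {m d : ℕ}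
    (hG : G.IsHomogeneous d) (hGne : G ≠ 0) (heq : G = D^(2*m+1) * h) :
    2*m+1 ≤ d ∧ h.IsHomogeneous (d - (2*m+1)) := by
  have hp : ((D : MvPolynomial (Fin 2) k)^(2*m+1)).IsHomogeneous (2*m+1) :=
    D_pow_isHomogeneous _
  have hph : ((D : MvPolynomial (Fin 2) k)^(2*m+1) * h).IsHomogeneous d := heq ▸ hG
  have hvan : ∀ i, (2*m+1) + i ≠ d → homogeneousComponent i h = 0 := by
    intro i hi
    rcases mul_eq_zero.mp (comp_vanish hp hph i hi) with h1 | h2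
    · exact absurd h1 (pow_ne_zero _ D_ne_zero)
    · exact h2
  have hle : 2*m+1 ≤ d := by
    by_contra hlt
    apply hGne
    rw [heq]
    have hzero : h = 0 := by
      conv_lhs => rw [← sum_homogeneousComponent h]
      exact Finset.sum_eq_zero fun i _ => hvan i (by omega)
    rw [hzero, mul_zero]
  refine ⟨hle, ?_⟩
  have hrep : h = homogeneousComponent (d - (2*m+1)) h := by
    conv_lhs => rw [← sum_homogeneousComponent h]
    rw [Finset.sum_eq_single (d - (2*m+1))]
    · intro i _ hne
      exact hvan i (by omega)
    · intro hnotmem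
      rw [mem_range, not_lt] at hnotmem
      rw [homogeneousComponent_eq_zero _ _ (show h.totalDegree < d - (2*m+1) by omega)]
  rw [hrep]
  exact homogeneousComponent_isHomogeneous _ _


section Families

variable (k) in
/-- Basis family when `d < 2m+1`. -/
noncomputable def famA (d : ℕ) : Fin (d/2+1) → MvPolynomial (Fin 2) k :=
  fun a => msym d a

variable (k) in
/-- Basis family when `d ≥ 2m+1`. -/
noncomputable def famB (m d : ℕ) :
    (Fin (d/2+1) ⊕ Fin ((d-(2*m+1))/2+1)) → MvPolynomial (Fin 2) k :=
  Sum.elim (fun a : Fin (d/2+1) => msym d a)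
    (fun c : Fin ((d-(2*m+1))/2+1) => NN m (d-(2*m+1)) c)

end Families

lemma msym_mem {m d a : ℕ} (ha : a ≤ d/2) :
    (msym d a : MvPolynomial (Fin 2) k) ∈ quasiInvariantSubmodule k 2 m d := by
  rw [mem_Q_iff]
  refine ⟨msym_isHomogeneous (by omega), ?_⟩
  rw [sw_msym (by omega), sub_self]
  exact Submodule.zero_mem _

lemma NN_mem {m d c : ℕ} (hd : 2*m+1 ≤ d) (hc : c ≤ (d-(2*m+1))/2) :
    (NN m (d-(2*m+1)) c : MvPolynomial (Fin 2) k) ∈ quasiInvariantSubmodule k 2 m d := by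
  rw [mem_Q_iff]
  constructor
  · have h1 := NN_isHomogeneous (m := m) (e := d-(2*m+1)) (c := c) (k := k) (by omega)
    have he : d - (2*m+1) + (2*m+1) = d := by omega
    rwa [he] at h1
  · rw [NN_sub_sw (by omega)]
    exact Ideal.mem_span_singleton.mpr ⟨msym (d-(2*m+1)) c, rfl⟩

lemma spanA {m d : ℕ} (hd : d < 2*m+1) :
    quasiInvariantSubmodule k 2 m d ≤ Submodule.span k (Set.range (famA k d)) := by
  intro F hF
  rw [mem_Q_iff] at hF
  obtain ⟨hhom, hideal⟩ := hF
  obtain ⟨h, hh⟩ := Ideal.mem_span_singleton.mp hideal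
  have hG0 : F - sw F = 0 := by
    by_contra hne
    have := (homog_factor (hhom.sub (sw_isHomogeneous hhom)) hne hh).1
    omega
  have hs : sw F = F := (sub_eq_zero.mp hG0).symm
  rw [symm_rep hhom hs]
  apply Submodule.sum_mem
  intro a ha
  rw [mem_range] at ha
  exact Submodule.smul_mem _ _ (Submodule.subset_span ⟨⟨a, by omega⟩, rfl⟩)

lemma spanB {m d : ℕ} (hd : 2*m+1 ≤ d) :
    quasiInvariantSubmodule k 2 m d ≤ Submodule.span k (Set.range (famB k m d)) := by
  intro F hF
  rw [mem_Q_iff] at hF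
  obtain ⟨hhom, hideal⟩ := hF
  obtain ⟨h, hh⟩ := Ideal.mem_span_singleton.mp hideal
  by_cases hG0 : F - sw F = 0
  · have hs : sw F = F := (sub_eq_zero.mp hG0).symm
    rw [symm_rep hhom hs]
    apply Submodule.sum_mem
    intro a ha
    rw [mem_range] at ha
    exact Submodule.smul_mem _ _ (Submodule.subset_span ⟨Sum.inl ⟨a, by omega⟩, rfl⟩)
  · have hfac := homog_factor (hhom.sub (sw_isHomogeneous hhom)) hG0 hh
    have hhom_h : h.IsHomogeneous (d - (2*m+1)) := hfac.2
    have hswG : sw (F - sw F) = -(F - sw F) := by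
      rw [map_sub, sw_sw]; ring
    have hsw_h : sw h = h := by
      have h1 : sw (F - sw F) = -((D:MvPolynomial (Fin 2) k)^(2*m+1)) * sw h := by
        have hodd : Odd (2*m+1) := ⟨m, by ring⟩
        rw [hh, map_mul, map_pow, sw_D, hodd.neg_pow]
      have h2 : -((D:MvPolynomial (Fin 2) k)^(2*m+1)) * sw h
          = -((D:MvPolynomial (Fin 2) k)^(2*m+1) * h) := by
        rw [← h1, hswG, hh]
      rw [neg_mul] at h2
      exact mul_left_cancel₀ (pow_ne_zero _ D_ne_zero) (neg_inj.mp h2)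
    have hrep_h := symm_rep hhom_h hsw_h
    have hNN_sub : ∀ a ∈ range ((d - (2*m+1))/2+1),
        (coeff (fn2 a (d - (2*m+1) - a)) h • NN m (d - (2*m+1)) a : MvPolynomial (Fin 2) k)
            - sw (coeff (fn2 a (d - (2*m+1) - a)) h • NN m (d - (2*m+1)) a)
          = D^(2*m+1) * (coeff (fn2 a (d - (2*m+1) - a)) h • msym (d - (2*m+1)) a) := by
      intro a ha
      rw [mem_range] at ha
      rw [map_smul, ← smul_sub, NN_sub_sw (by omega), mul_smul_comm]
    have hswF' : sw (F - ∑ a ∈ range ((d - (2*m+1))/2+1),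
          coeff (fn2 a (d - (2*m+1) - a)) h • NN m (d - (2*m+1)) a)
        = F - ∑ a ∈ range ((d - (2*m+1))/2+1),
          coeff (fn2 a (d - (2*m+1) - a)) h • NN m (d - (2*m+1)) a := by
      have hzero : (F - ∑ a ∈ range ((d - (2*m+1))/2+1),
            coeff (fn2 a (d - (2*m+1) - a)) h • NN m (d - (2*m+1)) a)
          - sw (F - ∑ a ∈ range ((d - (2*m+1))/2+1),
            coeff (fn2 a (d - (2*m+1) - a)) h • NN m (d - (2*m+1)) a) = 0 := by
        rw [map_sub, map_sum]
        have e1 : ∀ S1 S2 : MvPolynomial (Fin 2) k,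
            (F - S1) - (sw F - S2) = (F - sw F) - (S1 - S2) := by intros; ring
        rw [e1, ← Finset.sum_sub_distrib, Finset.sum_congr rfl hNN_sub, ← Finset.mul_sum,
          hh, ← hrep_h, sub_self]
      exact (sub_eq_zero.mp hzero).symm
    have hhomF' : (F - ∑ a ∈ range ((d - (2*m+1))/2+1),
        coeff (fn2 a (d - (2*m+1) - a)) h • NN m (d - (2*m+1)) a).IsHomogeneous d := by
      apply hhom.sub
      apply IsHomogeneous.sum
      intro a ha
      rw [mem_range] at ha
      have h1 := NN_isHomogeneous (m := m) (e := d - (2*m+1)) (c := a) (k := k) (by omega)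
      have he : d - (2*m+1) + (2*m+1) = d := by omega
      rw [he] at h1
      rw [smul_eq_C_mul]
      exact h1.C_mul _
    have hsplit : F = (F - ∑ a ∈ range ((d - (2*m+1))/2+1),
          coeff (fn2 a (d - (2*m+1) - a)) h • NN m (d - (2*m+1)) a)
        + ∑ a ∈ range ((d - (2*m+1))/2+1),
          coeff (fn2 a (d - (2*m+1) - a)) h • NN m (d - (2*m+1)) a := by ring
    rw [hsplit]
    apply Submodule.add_mem
    · rw [symm_rep hhomF' hswF']
      apply Submodule.sum_mem
      intro a ha
      rw [mem_range] at ha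
      exact Submodule.smul_mem _ _ (Submodule.subset_span ⟨Sum.inl ⟨a, by omega⟩, rfl⟩)
    · apply Submodule.sum_mem
      intro a ha
      rw [mem_range] at ha
      exact Submodule.smul_mem _ _ (Submodule.subset_span ⟨Sum.inr ⟨a, by omega⟩, rfl⟩)

lemma QA_eq {m d : ℕ} (hd : d < 2*m+1) :
    quasiInvariantSubmodule k 2 m d = Submodule.span k (Set.range (famA k d)) := by
  refine le_antisymm (spanA hd) ?_
  rw [Submodule.span_le]
  rintro x ⟨a, rfl⟩
  exact msym_mem (by omega : (a : ℕ) ≤ d/2)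

lemma QB_eq {m d : ℕ} (hd : 2*m+1 ≤ d) :
    quasiInvariantSubmodule k 2 m d = Submodule.span k (Set.range (famB k m d)) := by
  refine le_antisymm (spanB hd) ?_
  rw [Submodule.span_le]
  rintro x ⟨i, rfl⟩
  cases i with
  | inl a => exact msym_mem (by omega : (a : ℕ) ≤ d/2)
  | inr c => exact NN_mem hd (by omega : (c : ℕ) ≤ (d-(2*m+1))/2)

lemma famA_indep (d : ℕ) : LinearIndependent k (famA k d) := by
  rw [Fintype.linearIndependent_iff]
  intro g hg i
  have hsum : ∑ a ∈ range (d/2+1),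
      (fun b => if hb : b < d/2+1 then g ⟨b, hb⟩ else 0) a • (msym d a : MvPolynomial (Fin 2) k)
        = 0 := by
    rw [Finset.sum_range, ← hg]
    refine Finset.sum_congr rfl fun i _ => ?_
    dsimp only
    rw [dif_pos i.isLt]
    rfl
  have := msym_indep _ hsum i.val (mem_range.mpr i.isLt)
  simpa [i.isLt] using this

lemma famB_indep {m d : ℕ} (hd : 2*m+1 ≤ d) : LinearIndependent k (famB k m d) := by
  rw [Fintype.linearIndependent_iff]
  intro g hg
  rw [famB, Fintype.sum_sum_type] at hg
  simp only [Sum.elim_inl, Sum.elim_inr] at hg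
  -- antisymmetrize
  have hswA : sw (∑ a : Fin (d/2+1), g (Sum.inl a) • (msym d a : MvPolynomial (Fin 2) k))
      = ∑ a : Fin (d/2+1), g (Sum.inl a) • (msym d a : MvPolynomial (Fin 2) k) := by
    rw [map_sum]
    exact Finset.sum_congr rfl fun a _ => by
      rw [map_smul, sw_msym (by omega : 2 * (a:ℕ) ≤ d)]
  have hPhiB : (∑ c : Fin ((d-(2*m+1))/2+1),
        g (Sum.inr c) • (NN m (d-(2*m+1)) c : MvPolynomial (Fin 2) k))
      - sw (∑ c : Fin ((d-(2*m+1))/2+1),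
        g (Sum.inr c) • (NN m (d-(2*m+1)) c : MvPolynomial (Fin 2) k))
      = D^(2*m+1) * ∑ c : Fin ((d-(2*m+1))/2+1),
        g (Sum.inr c) • (msym (d-(2*m+1)) c : MvPolynomial (Fin 2) k) := by
    rw [map_sum, ← Finset.sum_sub_distrib, Finset.mul_sum]
    refine Finset.sum_congr rfl fun c _ => ?_
    rw [map_smul, ← smul_sub, NN_sub_sw (by omega : 2 * (c:ℕ) ≤ d-(2*m+1)), mul_smul_comm]
  have hzero : D^(2*m+1) * (∑ c : Fin ((d-(2*m+1))/2+1),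
      g (Sum.inr c) • (msym (d-(2*m+1)) c : MvPolynomial (Fin 2) k)) = 0 := by
    rw [← hPhiB]
    have h0 := congrArg (fun p => p - sw p) hg
    simp only [map_add, map_zero, sub_zero] at h0
    have e1 : ∀ A B swA swB : MvPolynomial (Fin 2) k,
        swA = A → (A + B) - (swA + swB) = B - swB := by
      intros A B swA swB hA
      rw [hA]; ring
    rw [e1 _ _ _ _ hswA] at h0
    exact h0
  have hsum0 : ∑ c : Fin ((d-(2*m+1))/2+1),
      g (Sum.inr c) • (msym (d-(2*m+1)) c : MvPolynomial (Fin 2) k) = 0 := by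
    rcases mul_eq_zero.mp hzero with h1 | h2
    · exact absurd h1 (pow_ne_zero _ D_ne_zero)
    · exact h2
  have hinr : ∀ c : Fin ((d-(2*m+1))/2+1), g (Sum.inr c) = 0 := by
    intro c
    have hsum' : ∑ a ∈ range ((d-(2*m+1))/2+1),
        (fun b => if hb : b < (d-(2*m+1))/2+1 then g (Sum.inr ⟨b, hb⟩) else 0) a
          • (msym (d-(2*m+1)) a : MvPolynomial (Fin 2) k) = 0 := by
      rw [Finset.sum_range, ← hsum0]
      refine Finset.sum_congr rfl fun i _ => ?_
      dsimp only
      rw [dif_pos i.isLt]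
    have := msym_indep _ hsum' c.val (mem_range.mpr c.isLt)
    simpa [c.isLt] using this
  intro i
  cases i with
  | inr c => exact hinr c
  | inl a =>
    have hB0 : (∑ c : Fin ((d-(2*m+1))/2+1),
        g (Sum.inr c) • (NN m (d-(2*m+1)) c : MvPolynomial (Fin 2) k)) = 0 :=
      Finset.sum_eq_zero fun c _ => by rw [hinr c, zero_smul]
    rw [hB0, add_zero] at hg
    have hsum' : ∑ b ∈ range (d/2+1),
        (fun b => if hb : b < d/2+1 then g (Sum.inl ⟨b, hb⟩) else 0) b
          • (msym d b : MvPolynomial (Fin 2) k) = 0 := by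
      rw [Finset.sum_range, ← hg]
      refine Finset.sum_congr rfl fun i _ => ?_
      dsimp only
      rw [dif_pos i.isLt]
    have := msym_indep _ hsum' a.val (mem_range.mpr a.isLt)
    simpa [a.isLt] using this

end QIProof

set_option maxHeartbeats 2000000 in
open QIProof in
/-- over every field `k`, `dim_k Q_{m,d}(2) = ⌊d/2⌋ + 1` if `d < 2m + 1`, and
`⌊d/2⌋ + ⌊(d − 2m − 1)/2⌋ + 2` if `d ≥ 2m + 1` (equivalently, the Hilbert series of
`Q_m(2)` over every field is `(1 + t^{2m+1})/((1 − t)(1 − t²))`). -/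
theorem stmt4 (k : Type*) [Field k] (m d : ℕ) :
    Module.finrank k (quasiInvariantSubmodule k 2 m d)
      = if d < 2 * m + 1 then d / 2 + 1 else d / 2 + (d - (2 * m + 1)) / 2 + 2 := by
  by_cases hcase : d < 2 * m + 1
  · rw [if_pos hcase, QA_eq hcase]
    rw [finrank_span_eq_card (famA_indep d)]
    rw [Fintype.card_fin]
  · rw [if_neg hcase, QB_eq (show 2*m+1 ≤ d by omega)]
    rw [finrank_span_eq_card (famB_indep (show 2*m+1 ≤ d by omega))]
    rw [Fintype.card_sum, Fintype.card_fin, Fintype.card_fin]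
    omega
end

section
/- Let k be a field of prime characteristic p, let n ≥ 1, and let m, l, a be nonnegative integers such that e := 2m + 1 − p^a(2l + 1) ≥ 0. If P ∈ k[x_1,…,x_n] is l-quasi-invariant, then the polynomial P^{p^a} · ∏_{1 ≤ i < j ≤ n} (x_i − x_j)^e is m-quasi-invariant. -/
open MvPolynomial

/-- A polynomial `F ∈ k[x_1, …, x_n]` is `m`-quasi-invariant if
`(x_i − x_j)^{2m+1} ∣ F − s_{ij} F` for all `i < j`. -/
def IsQuasiInvariant (k : Type*) [CommRing k] (n m : ℕ)
    (F : MvPolynomial (Fin n) k) : Prop :=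
  ∀ i j : Fin n, i < j →
    (X i - X j) ^ (2 * m + 1) ∣ F - rename (Equiv.swap i j) F

/-- over a field `k` of prime characteristic `p`, if
`e := 2m + 1 − p^a (2l + 1) ≥ 0` and `P` is `l`-quasi-invariant, then
`P^{p^a} · ∏_{i<j} (x_i − x_j)^e` is `m`-quasi-invariant. -/
theorem stmt5 (k : Type*) [Field k] (p : ℕ) (hp : p.Prime) [CharP k p]
    (n m l a e : ℕ) (hn : 1 ≤ n)
    (he : 2 * m + 1 = p ^ a * (2 * l + 1) + e)
    (P : MvPolynomial (Fin n) k) (hP : IsQuasiInvariant k n l P) :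
    IsQuasiInvariant k n m
      (P ^ (p ^ a) *
        ∏ q ∈ Finset.univ.filter (fun q : Fin n × Fin n => q.1 < q.2),
          (X q.1 - X q.2) ^ e) := by
  have : Fact p.Prime := ⟨hp⟩
  intro i j hij
  set σ := Equiv.swap i j with hσ
  set S := Finset.univ.filter (fun q : Fin n × Fin n => q.1 < q.2) with hS
  set D : MvPolynomial (Fin n) k := ∏ q ∈ S, (X q.1 - X q.2) ^ e with hD
  -- (-1)^e = 1
  have hneg : ((-1 : MvPolynomial (Fin n) k)) ^ e = 1 := by
    rcases Nat.even_or_odd e with he' | he'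
    · exact he'.neg_one_pow
    · have h2 : p = 2 := by
        rcases Nat.even_or_odd (p ^ a) with hpa | hpa
        · have : 2 ∣ p ^ a := hpa.two_dvd
          have := (Nat.Prime.dvd_of_dvd_pow Nat.prime_two this)
          exact ((Nat.prime_dvd_prime_iff_eq Nat.prime_two hp).mp this).symm
        · exfalso
          have : Odd (p ^ a * (2 * l + 1)) := hpa.mul (⟨l, by ring⟩)
          obtain ⟨c, hc⟩ := this
          obtain ⟨d, hd⟩ := he'
          omega
      subst h2
      have : CharP (MvPolynomial (Fin n) k) 2 := inferInstance
      have hneg1 : (-1 : MvPolynomial (Fin n) k) = 1 := by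
        exact CharTwo.neg_eq 1
      rw [hneg1, one_pow]
  -- swap-invariance of D
  have hswap : ∀ x y : Fin n, (X x - X y : MvPolynomial (Fin n) k) ^ e
      = (X y - X x) ^ e := by
    intro x y
    rw [show (X x - X y : MvPolynomial (Fin n) k) = -1 * (X y - X x) by ring,
      mul_pow, hneg, one_mul]
  have hDswap : rename σ D = D := by
    rw [hD, map_prod]
    refine Finset.prod_bij'
      (fun q _ => if σ q.1 < σ q.2 then (σ q.1, σ q.2) else (σ q.2, σ q.1))
      (fun q _ => if σ q.1 < σ q.2 then (σ q.1, σ q.2) else (σ q.2, σ q.1))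
      ?_ ?_ ?_ ?_ ?_
    · intro q hq
      simp only [hS, Finset.mem_filter, Finset.mem_univ, true_and] at hq ⊢
      have hne : σ q.1 ≠ σ q.2 := by
        simp only [ne_eq, EmbeddingLike.apply_eq_iff_eq]
        exact hq.ne
      rcases lt_or_gt_of_ne hne with h | h
      · simp [h]
      · simp only [not_lt.mpr h.le, if_false]
        exact h
    · intro q hq
      simp only [hS, Finset.mem_filter, Finset.mem_univ, true_and] at hq ⊢
      have hne : σ q.1 ≠ σ q.2 := by
        simp only [ne_eq, EmbeddingLike.apply_eq_iff_eq]
        exact hq.ne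
      rcases lt_or_gt_of_ne hne with h | h
      · simp [h]
      · simp only [not_lt.mpr h.le, if_false]
        exact h
    · intro q hq
      simp only [hS, Finset.mem_filter, Finset.mem_univ, true_and] at hq
      by_cases h : σ q.1 < σ q.2 <;> rw [hσ] at h <;>
        simp [h, hσ, Equiv.swap_apply_self, not_lt.mpr hq.le, hq]
    · intro q hq
      simp only [hS, Finset.mem_filter, Finset.mem_univ, true_and] at hq
      by_cases h : σ q.1 < σ q.2 <;> rw [hσ] at h <;>
        simp [h, hσ, Equiv.swap_apply_self, not_lt.mpr hq.le, hq]
    · intro q hq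
      simp only [map_pow, map_sub, rename_X]
      by_cases h : σ q.1 < σ q.2
      · simp [h]
      · simp only [h, if_false]
        exact (hswap (σ q.2) (σ q.1)).symm
  -- main computation
  have hfact : P ^ p ^ a * D - rename σ (P ^ p ^ a * D)
      = (P - rename σ P) ^ p ^ a * D := by
    rw [map_mul, map_pow, hDswap, sub_pow_char_pow]
    ring
  rw [hfact, he, pow_add]
  refine mul_dvd_mul ?_ ?_
  · rw [show p ^ a * (2 * l + 1) = (2 * l + 1) * p ^ a by ring, pow_mul]
    exact pow_dvd_pow_of_dvd (hP i j hij) _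
  · rw [hD, hS]
    have h := Finset.dvd_prod_of_mem
      (fun q : Fin n × Fin n => (X q.1 - X q.2 : MvPolynomial (Fin n) k) ^ e)
      (Finset.mem_filter.mpr ⟨Finset.mem_univ _, hij⟩ :
        ((i, j) : Fin n × Fin n) ∈
          Finset.univ.filter (fun q : Fin n × Fin n => q.1 < q.2))
    simpa using h
end

section
/- Fix indices 1 ≤ i < j ≤ n and an integer k ≥ 0. Suppose F ∈ ℂ[x_1,…,x_n] is divisible by x_i − x_j and satisfies the (k+1)-quasi-invariance condition for the pair (i,j). Then F is divisible by (x_i − x_j)^2 in ℂ[x_1,…,x_n], and the polynomial F/(x_i − x_j)^2 satisfies the k-quasi-invariance condition for the pair (i,j). -/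
open MvPolynomial Filter Topology

/-- `F ∈ ℂ[x_1, …, x_n]` satisfies the `m`-quasi-invariance condition for the pair `(i,j)`
with respect to the twisting functions `f_1, …, f_n` on `U`: there is a function `h`,
holomorphic on `U^n`, with
`f_1(x_1)⋯f_n(x_n)·F(x) − (the same expression with x_i, x_j swapped) = (x_i − x_j)^{2m+1} h(x)`
on `U^n`. -/
def QuasiCond (n : ℕ) (U : Set ℂ) (f : Fin n → ℂ → ℂ) (m : ℕ) (i j : Fin n)
    (F : MvPolynomial (Fin n) ℂ) : Prop :=
  ∃ h : (Fin n → ℂ) → ℂ,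
    DifferentiableOn ℂ h {x : Fin n → ℂ | ∀ k, x k ∈ U} ∧
    ∀ x : Fin n → ℂ, (∀ k, x k ∈ U) →
      (∏ k, f k (x k)) * MvPolynomial.eval x F
        - (∏ k, f k ((x ∘ Equiv.swap i j) k)) * MvPolynomial.eval (x ∘ Equiv.swap i j) F
        = (x i - x j) ^ (2 * m + 1) * h x

lemma aux_rename_dvd (n : ℕ) (i j : Fin n) (P : MvPolynomial (Fin n) ℂ) :
    (X i - X j) ∣ (P - rename (fun l => if l = j then i else l) P) := by
  set r : Fin n → Fin n := fun l => if l = j then i else l with hr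
  induction P using MvPolynomial.induction_on with
  | C a => simp
  | add p q hp hq =>
      have := dvd_add hp hq
      simpa [map_add, sub_add_sub_comm] using this
  | mul_X p l hp =>
      rw [map_mul, rename_X]
      by_cases hl : l = j
      · have : p * X l - rename r p * X (r l)
            = (p - rename r p) * X j - rename r p * (X i - X j) := by
          simp only [hr, hl, if_pos rfl]; ring
        rw [this]
        exact dvd_sub (hp.mul_right _) (Dvd.intro_left _ rfl)
      · have : p * X l - rename r p * X (r l) = (p - rename r p) * X l := by
          simp only [hr, if_neg hl]; ring
        rw [this]
        exact hp.mul_right _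

lemma aux_eval_zero (n : ℕ) (s : Set (Fin n → ℂ)) (hs : IsOpen s) (hne : s.Nonempty)
    (Q : MvPolynomial (Fin n) ℂ) (h : ∀ x ∈ s, eval x Q = 0) : Q = 0 := by
  have hA : AnalyticOnNhd ℂ (fun x : Fin n → ℂ => eval x Q) Set.univ := by
    simpa using AnalyticOnNhd.eval_continuousLinearMap
      (ContinuousLinearMap.id ℂ (Fin n → ℂ)) Q
  obtain ⟨z, hz⟩ := hne
  have hEq : Set.EqOn (fun x : Fin n → ℂ => eval x Q) 0 Set.univ := by
    apply hA.eqOn_zero_of_preconnected_of_eventuallyEq_zero isPreconnected_univ (Set.mem_univ z)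
    filter_upwards [hs.mem_nhds hz] with x hx using h x hx
  apply MvPolynomial.funext
  intro x
  simpa using hEq (Set.mem_univ x)

lemma aux_cont (n : ℕ) (P : MvPolynomial (Fin n) ℂ) :
    Continuous fun x : Fin n → ℂ => eval x P := by
  have hA : AnalyticOnNhd ℂ (fun x : Fin n → ℂ => eval x P) Set.univ := by
    simpa using AnalyticOnNhd.eval_continuousLinearMap
      (ContinuousLinearMap.id ℂ (Fin n → ℂ)) P
  rw [← continuousOn_univ]
  exact hA.continuousOn


set_option maxHeartbeats 1000000 in
/-- if `F` is divisible by `x_i − x_j` and satisfies the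
`(k+1)`-quasi-invariance condition for the pair `(i,j)`, then `(x_i − x_j)² ∣ F` and
`F/(x_i − x_j)²` satisfies the `k`-quasi-invariance condition for the pair `(i,j)`. -/
theorem stmt8 (n : ℕ) (U : Set ℂ) (hUne : U.Nonempty) (hUo : IsOpen U)
    (f : Fin n → ℂ → ℂ) (hf : ∀ l, DifferentiableOn ℂ (f l) U)
    (hf0 : ∀ l, ∀ x ∈ U, f l x ≠ 0)
    (i j : Fin n) (hij : i < j) (k : ℕ)
    (F : MvPolynomial (Fin n) ℂ) (hdvd : (X i - X j) ∣ F)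
    (hF : QuasiCond n U f (k + 1) i j F) :
    ∃ G : MvPolynomial (Fin n) ℂ, F = (X i - X j) ^ 2 * G ∧ QuasiCond n U f k i j G := by
  classical
  have hijne : i ≠ j := ne_of_lt hij
  obtain ⟨P, hP⟩ := hdvd
  obtain ⟨h, hhdiff, hh⟩ := hF
  set σ : Equiv.Perm (Fin n) := Equiv.swap i j with hσdef
  set W : Set (Fin n → ℂ) := {x : Fin n → ℂ | ∀ k, x k ∈ U} with hWdef
  have hWo : IsOpen W := by
    have : W = ⋂ k, (fun x : Fin n → ℂ => x k) ⁻¹' U := by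
      ext x; simp [hWdef]
    rw [this]
    exact isOpen_iInter_of_finite fun k => hUo.preimage (continuous_apply k)
  have hσmapsto : ∀ x : Fin n → ℂ, x ∈ W → (x ∘ σ) ∈ W := fun x hx l => hx (σ l)
  have hσself : ∀ x : Fin n → ℂ, x i = x j → x ∘ σ = x := by
    intro x hx
    funext l
    simp only [Function.comp_apply, Equiv.swap_apply_def, hσdef]
    split_ifs with h1 h2
    · rw [h1, hx]
    · rw [h2, hx]
    · rfl
  have hsi : σ i = j := Equiv.swap_apply_left i j
  have hsj : σ j = i := Equiv.swap_apply_right i j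
  -- continuity of the product of f's
  have hAcont : ContinuousOn (fun x : Fin n → ℂ => ∏ l, f l (x l)) W := by
    apply continuousOn_finset_prod
    intro l _
    exact ((hf l).continuousOn).comp (continuous_apply l).continuousOn (fun x hx => hx l)
  have hA0 : ∀ x ∈ W, (∏ l, f l (x l)) ≠ 0 := by
    intro x hx
    exact Finset.prod_ne_zero_iff.mpr fun l _ => hf0 l (x l) (hx l)
  -- the auxiliary function g
  set g : (Fin n → ℂ) → ℂ := fun x =>
    (∏ l, f l (x l)) * eval x P + (∏ l, f l ((x ∘ σ) l)) * eval (x ∘ σ) P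
      - (x i - x j) ^ (2 * k + 2) * h x with hgdef
  have hkey : ∀ x ∈ W, (x i - x j) * g x = 0 := by
    intro x hx
    have h1 := hh x hx
    have e1 : eval x F = (x i - x j) * eval x P := by
      rw [hP]; simp
    have e2 : eval (x ∘ σ) F = (x j - x i) * eval (x ∘ σ) P := by
      rw [hP]; simp [Function.comp_apply, hsi, hsj]
    rw [e1, e2] at h1
    rw [hgdef]
    have : (2 : ℕ) * (k + 1) + 1 = (2 * k + 2) + 1 := by ring
    rw [this, pow_succ] at h1
    ring_nf
    ring_nf at h1
    linear_combination h1
  have hgcont : ContinuousOn g W := by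
    apply ContinuousOn.sub
    · apply ContinuousOn.add
      · exact hAcont.mul (aux_cont n P).continuousOn
      · have hcomp : Continuous fun x : Fin n → ℂ => x ∘ σ :=
          continuous_pi fun l => continuous_apply (σ l)
        exact (hAcont.comp hcomp.continuousOn hσmapsto).mul
          (((aux_cont n P).comp hcomp).continuousOn)
    · exact (((continuous_apply i).sub (continuous_apply j)).pow _).continuousOn.mul hhdiff.continuousOn
  -- Step 1: P vanishes on the diagonal within W
  have hPzero : ∀ a : Fin n → ℂ, a ∈ W → a i = a j → eval a P = 0 := by
    intro a ha haij
    set φ : ℂ → (Fin n → ℂ) := fun t => Function.update a i (a i + t) with hφdef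
    have hφcont : Continuous φ :=
      continuous_const.update i (continuous_const.add continuous_id)
    have hφ0 : φ 0 = a := by
      simp [hφdef]
    have hU1 : ∀ᶠ t in 𝓝 (0 : ℂ), a i + t ∈ U := by
      have hca : ContinuousAt (fun t : ℂ => a i + t) 0 :=
        (continuous_const.add continuous_id).continuousAt
      have : a i + 0 ∈ U := by simpa using ha i
      exact hca.eventually_mem (hUo.mem_nhds this)
    have hev : ∀ᶠ t in 𝓝[≠] (0 : ℂ), g (φ t) = 0 := by
      filter_upwards [eventually_nhdsWithin_of_eventually_nhds hU1,
        self_mem_nhdsWithin] with t ht htne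
      have hφW : φ t ∈ W := by
        intro l
        by_cases hl : l = i
        · subst hl; simpa [hφdef] using ht
        · simpa [hφdef, Function.update_of_ne hl] using ha l
      have hφi : φ t i = a i + t := by simp [hφdef]
      have hφj : φ t j = a j := by
        simp [hφdef, Function.update_of_ne (Ne.symm hijne)]
      have hsub : φ t i - φ t j = t := by
        rw [hφi, hφj, haij]; ring
      have := hkey (φ t) hφW
      rw [hsub] at this
      exact (mul_eq_zero.mp this).resolve_left htne
    have htend : Filter.Tendsto (g ∘ φ) (𝓝[≠] (0 : ℂ)) (𝓝 (g a)) := by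
      have h1 : Filter.Tendsto φ (𝓝[≠] (0 : ℂ)) (𝓝 a) := by
        have := (hφcont.tendsto 0).mono_left (nhdsWithin_le_nhds (s := {(0:ℂ)}ᶜ))
        rwa [hφ0] at this
      exact Filter.Tendsto.comp (hgcont.continuousAt (hWo.mem_nhds ha)) h1
    have htend0 : Filter.Tendsto (g ∘ φ) (𝓝[≠] (0 : ℂ)) (𝓝 0) := by
      apply Filter.Tendsto.congr' _ tendsto_const_nhds
      filter_upwards [hev] with t ht using ht.symm
    have hga : g a = 0 := tendsto_nhds_unique htend htend0
    -- unfold g at the diagonal point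
    rw [hgdef] at hga
    simp only [hσself a haij] at hga
    have hz : (a i - a j) = 0 := sub_eq_zero.mpr haij
    rw [hz, zero_pow (by omega : 2 * k + 2 ≠ 0)] at hga
    have h2 : (2 : ℂ) * ((∏ l, f l (a l)) * eval a P) = 0 := by linear_combination hga
    have hAne := hA0 a ha
    have h3 : (∏ l, f l (a l)) * eval a P = 0 := by
      rcases mul_eq_zero.mp h2 with h2' | h2'
      · norm_num at h2'
      · exact h2'
    exact (mul_eq_zero.mp h3).resolve_left hAne
  -- Step 2: (X i - X j) ∣ P
  set r : Fin n → Fin n := fun l => if l = j then i else l with hrdef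
  have hren : rename r P = 0 := by
    obtain ⟨u, hu⟩ := hUne
    apply aux_eval_zero n W hWo ⟨fun _ => u, fun _ => hu⟩
    intro y hy
    rw [eval_rename]
    apply hPzero
    · intro l
      exact hy (r l)
    · simp only [Function.comp_apply, hrdef]
      simp [hijne]
  have hdvdP : (X i - X j) ∣ P := by
    have := aux_rename_dvd n i j P
    rwa [← hrdef, hren, sub_zero] at this
  obtain ⟨G, hG⟩ := hdvdP
  refine ⟨G, ?_, ?_⟩
  · rw [hP, hG]; ring
  · refine ⟨h, hhdiff, ?_⟩
    intro x hx
    rw [← hσdef]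
    have e1 : eval x F = (x i - x j) ^ 2 * eval x G := by
      rw [hP, hG]; simp; ring
    have e2 : eval (x ∘ σ) F = (x i - x j) ^ 2 * eval (x ∘ σ) G := by
      rw [hP, hG]; simp [Function.comp_apply, hsi, hsj]; ring
    by_cases hxy : x i = x j
    · rw [hσself x hxy, sub_eq_zero.mpr hxy, zero_pow (by omega : 2 * k + 1 ≠ 0)]
      ring
    · have hne : x i - x j ≠ 0 := sub_ne_zero.mpr hxy
      have h1 := hh x hx
      rw [e1, e2] at h1
      rw [show 2 * (k + 1) + 1 = (2 * k + 1) + 2 by ring, pow_add] at h1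
      apply mul_left_cancel₀ (pow_ne_zero 2 hne)
      linear_combination h1
end

section
/- Let f and g both be holomorphic and nowhere vanishing on U, and let m ≥ 0. If F ∈ Q_m(f) and G ∈ Q_m(g) (both with respect to U), then the product FG belongs to Q_m(fg) with respect to U. -/
open MvPolynomial

/-- `F ∈ ℂ[x,y]` belongs to `Q_m(f)` with respect to `U`: there is a function `h`,
holomorphic on `U × U`, with `f(x)F(x,y) − f(y)F(y,x) = (x − y)^{2m+1} h(x,y)` on `U × U`. -/
def MemQ (U : Set ℂ) (f : ℂ → ℂ) (m : ℕ) (F : MvPolynomial (Fin 2) ℂ) : Prop :=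
  ∃ h : ℂ × ℂ → ℂ,
    DifferentiableOn ℂ h (U ×ˢ U) ∧
    ∀ x ∈ U, ∀ y ∈ U,
      f x * MvPolynomial.eval ![x, y] F - f y * MvPolynomial.eval ![y, x] F
        = (x - y) ^ (2 * m + 1) * h (x, y)

lemma diff_eval (F : MvPolynomial (Fin 2) ℂ) :
    Differentiable ℂ (fun p : ℂ × ℂ => MvPolynomial.eval ![p.1, p.2] F) := by
  induction F using MvPolynomial.induction_on with
  | C a => simpa using differentiable_const a
  | add p q hp hq => simp only [map_add]; exact hp.add hq
  | mul_X p i hp =>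
      simp only [map_mul, MvPolynomial.eval_X]
      refine hp.mul ?_
      fin_cases i
      · simpa using differentiable_fst
      · simpa using differentiable_snd

lemma diff_eval' (F : MvPolynomial (Fin 2) ℂ) :
    Differentiable ℂ (fun p : ℂ × ℂ => MvPolynomial.eval ![p.2, p.1] F) := by
  induction F using MvPolynomial.induction_on with
  | C a => simp
  | add p q hp hq => simp only [map_add]; exact hp.add hq
  | mul_X p i hp =>
      simp only [map_mul, MvPolynomial.eval_X]
      refine hp.mul ?_
      fin_cases i
      · simpa using differentiable_snd
      · simpa using differentiable_fst

/-- if `F ∈ Q_m(f)` and `G ∈ Q_m(g)` (both with respect to `U`), then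
`FG ∈ Q_m(fg)` with respect to `U`. -/
theorem stmt10 (U : Set ℂ) (hUne : U.Nonempty) (hUo : IsOpen U)
    (f g : ℂ → ℂ)
    (hf : DifferentiableOn ℂ f U) (hf0 : ∀ x ∈ U, f x ≠ 0)
    (hg : DifferentiableOn ℂ g U) (hg0 : ∀ x ∈ U, g x ≠ 0)
    (m : ℕ) (F G : MvPolynomial (Fin 2) ℂ)
    (hF : MemQ U f m F) (hG : MemQ U g m G) :
    MemQ U (fun x => f x * g x) m (F * G) := by
  obtain ⟨h1, h1d, h1e⟩ := hF
  obtain ⟨h2, h2d, h2e⟩ := hG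
  refine ⟨fun p => (2:ℂ)⁻¹ * (h1 p * (g p.1 * MvPolynomial.eval ![p.1, p.2] G
      + g p.2 * MvPolynomial.eval ![p.2, p.1] G)
      + (f p.1 * MvPolynomial.eval ![p.1, p.2] F
      + f p.2 * MvPolynomial.eval ![p.2, p.1] F) * h2 p), ?_, ?_⟩
  · have hfs : DifferentiableOn ℂ (fun p : ℂ × ℂ => f p.1) (U ×ˢ U) :=
      hf.comp differentiable_fst.differentiableOn (fun p hp => hp.1)
    have hfs' : DifferentiableOn ℂ (fun p : ℂ × ℂ => f p.2) (U ×ˢ U) :=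
      hf.comp differentiable_snd.differentiableOn (fun p hp => hp.2)
    have hgs : DifferentiableOn ℂ (fun p : ℂ × ℂ => g p.1) (U ×ˢ U) :=
      hg.comp differentiable_fst.differentiableOn (fun p hp => hp.1)
    have hgs' : DifferentiableOn ℂ (fun p : ℂ × ℂ => g p.2) (U ×ˢ U) :=
      hg.comp differentiable_snd.differentiableOn (fun p hp => hp.2)
    have hnum : DifferentiableOn ℂ (fun p : ℂ × ℂ =>
        h1 p * (g p.1 * MvPolynomial.eval ![p.1, p.2] G
          + g p.2 * MvPolynomial.eval ![p.2, p.1] G)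
        + (f p.1 * MvPolynomial.eval ![p.1, p.2] F
          + f p.2 * MvPolynomial.eval ![p.2, p.1] F) * h2 p) (U ×ˢ U) :=
      ((h1d.mul ((hgs.mul (diff_eval G).differentiableOn).add
      (hgs'.mul (diff_eval' G).differentiableOn))).add
      (((hfs.mul (diff_eval F).differentiableOn).add
      (hfs'.mul (diff_eval' F).differentiableOn)).mul h2d))
    exact hnum.const_mul _
  · intro x hx y hy
    have e1 := h1e x hx y hy
    have e2 := h2e x hx y hy
    simp only [map_mul]
    have : (2:ℂ) * (f x * g x * (MvPolynomial.eval ![x, y] F * MvPolynomial.eval ![x, y] G)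
        - f y * g y * (MvPolynomial.eval ![y, x] F * MvPolynomial.eval ![y, x] G))
        = (f x * MvPolynomial.eval ![x, y] F - f y * MvPolynomial.eval ![y, x] F)
          * (g x * MvPolynomial.eval ![x, y] G + g y * MvPolynomial.eval ![y, x] G)
        + (f x * MvPolynomial.eval ![x, y] F + f y * MvPolynomial.eval ![y, x] F)
          * (g x * MvPolynomial.eval ![x, y] G - g y * MvPolynomial.eval ![y, x] G) := by
      ring
    rw [e1, e2] at this
    field_simp
    linear_combination this
end

section
/- Let a ∈ ℂ, let b ∈ ℂ be a non-integer, let U = {x ∈ ℂ : x − a ∉ ℝ_{≤0}} be the slit plane, and let f(x) = exp(b·Log(x − a)) be the principal branch of (x − a)^b, which is holomorphic and nowhere vanishing on U. If m ≥ 0 and F ∈ Q_m(f) with respect to U, then (x − a)^m divides the one-variable polynomial F(x,x) in ℂ[x]. -/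
open MvPolynomial
section StmtAux
open Complex Filter Topology Finset

noncomputable def pw (μ v : ℂ) : ℂ := Complex.exp (μ * Complex.log v)

lemma pw_one (μ : ℂ) : pw μ 1 = 1 := by simp [pw]

lemma pw_mul (μ ν v : ℂ) : pw μ v * pw ν v = pw (μ + ν) v := by
  simp [pw, ← Complex.exp_add]; ring_nf

lemma pw_analyticAt {v : ℂ} (hv : v ∈ Complex.slitPlane) (μ : ℂ) :
    AnalyticAt ℂ (pw μ) v := by
  exact (analyticAt_const.mul (analyticAt_clog hv)).cexp

lemma pw_hasDerivAt {v : ℂ} (hv : v ∈ Complex.slitPlane) (μ : ℂ) :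
    HasDerivAt (pw μ) (μ * pw (μ - 1) v) v := by
  have hv0 : v ≠ 0 := Complex.slitPlane_ne_zero hv
  have h1 : HasDerivAt (fun z => μ * Complex.log z) (μ * v⁻¹) v :=
    (Complex.hasDerivAt_log hv).const_mul μ
  have h2 := h1.cexp
  convert h2 using 1
  show μ * pw (μ - 1) v = Complex.exp (μ * Complex.log v) * (μ * v⁻¹)
  have : Complex.exp (μ * Complex.log v) = pw (μ - 1) v * v := by
    rw [show μ = (μ - 1) + 1 by ring]
    rw [show ((μ-1)+1) * Complex.log v = (μ-1) * Complex.log v + Complex.log v by ring]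
    rw [Complex.exp_add, Complex.exp_log hv0]
    norm_num [pw]
  rw [this]; field_simp
  all_goals rfl
lemma pw_nat {v : ℂ} (hv : v ≠ 0) (q : ℕ) : pw (q : ℂ) v = v ^ q := by
  rw [pw, Complex.exp_nat_mul, Complex.exp_log hv]

def VOrd (φ : ℂ → ℂ) (c : ℂ) (N : ℕ) : Prop :=
  ∃ H : ℂ → ℂ, AnalyticAt ℂ H c ∧ ∀ᶠ z in 𝓝 c, φ z = (z - c) ^ N * H z

lemma VOrd.congr {φ φ' : ℂ → ℂ} {c : ℂ} {N : ℕ} (h : VOrd φ c N)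
    (he : φ =ᶠ[𝓝 c] φ') : VOrd φ' c N := by
  obtain ⟨H, hH, hev⟩ := h
  exact ⟨H, hH, he.symm.trans hev⟩

lemma VOrd.mono {φ : ℂ → ℂ} {c : ℂ} {N N' : ℕ} (hle : N' ≤ N) (h : VOrd φ c N) :
    VOrd φ c N' := by
  obtain ⟨H, hH, hev⟩ := h
  refine ⟨fun z => (z - c) ^ (N - N') * H z,
    ((analyticAt_id.sub analyticAt_const).pow _).mul hH, ?_⟩
  filter_upwards [hev] with z hz
  rw [hz, ← mul_assoc, ← pow_add, Nat.add_sub_cancel' hle]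

lemma VOrd.mul_analytic {φ g : ℂ → ℂ} {c : ℂ} {N : ℕ} (h : VOrd φ c N)
    (hg : AnalyticAt ℂ g c) : VOrd (fun z => g z * φ z) c N := by
  obtain ⟨H, hH, hev⟩ := h
  refine ⟨fun z => g z * H z, hg.mul hH, ?_⟩
  filter_upwards [hev] with z hz
  rw [hz]; ring

lemma VOrd.const_mul {φ : ℂ → ℂ} {c : ℂ} {N : ℕ} (k : ℂ) (h : VOrd φ c N) :
    VOrd (fun z => k * φ z) c N := h.mul_analytic analyticAt_const

lemma VOrd.sub {φ ψ : ℂ → ℂ} {c : ℂ} {N : ℕ} (h1 : VOrd φ c N) (h2 : VOrd ψ c N) :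
    VOrd (fun z => φ z - ψ z) c N := by
  obtain ⟨H, hH, hev⟩ := h1
  obtain ⟨K, hK, hev'⟩ := h2
  refine ⟨fun z => H z - K z, hH.sub hK, ?_⟩
  filter_upwards [hev, hev'] with z hz hz'
  rw [hz, hz']; ring

lemma VOrd.zero {c : ℂ} {N : ℕ} : VOrd (fun _ => (0 : ℂ)) c N :=
  ⟨fun _ => 0, analyticAt_const, by filter_upwards with z; simp⟩

lemma VOrd.sum {ι : Type*} {S : Finset ι} {φ : ι → ℂ → ℂ} {c : ℂ} {N : ℕ}
    (h : ∀ i ∈ S, VOrd (φ i) c N) : VOrd (fun z => ∑ i ∈ S, φ i z) c N := by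
  classical
  induction S using Finset.induction_on with
  | empty => simpa using VOrd.zero
  | insert _ _ hni ih =>
    rename_i i S'
    have h1 := h i (Finset.mem_insert_self i S')
    have h2 := ih fun j hj => h j (Finset.mem_insert_of_mem hj)
    obtain ⟨H, hH, hev⟩ := h1
    obtain ⟨K, hK, hev'⟩ := h2
    refine ⟨fun z => H z + K z, hH.add hK, ?_⟩
    filter_upwards [hev, hev'] with z hz hz'
    rw [Finset.sum_insert hni, hz, hz']; ring

lemma VOrd.eval_zero {φ : ℂ → ℂ} {c : ℂ} {N : ℕ} (h : VOrd φ c (N + 1)) : φ c = 0 := by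
  obtain ⟨H, hH, hev⟩ := h
  have := hev.self_of_nhds
  simpa using this

lemma AnalyticAt.deriv' {H : ℂ → ℂ} {c : ℂ} (hH : AnalyticAt ℂ H c) :
    AnalyticAt ℂ (deriv H) c := by
  have : AnalyticOnNhd ℂ H {y | AnalyticAt ℂ H y} := fun y hy => hy
  exact this.deriv c hH

lemma VOrd.derivOrd {φ : ℂ → ℂ} {c : ℂ} {N : ℕ} (h : VOrd φ c (N + 1)) :
    VOrd (_root_.deriv φ) c N := by
  obtain ⟨H, hH, hev⟩ := h
  refine ⟨fun z => (N + 1 : ℂ) * H z + (z - c) * _root_.deriv H z,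
    (analyticAt_const.mul hH).add ((analyticAt_id.sub analyticAt_const).mul hH.deriv'), ?_⟩
  have hd : _root_.deriv φ =ᶠ[𝓝 c] _root_.deriv fun z => (z - c) ^ (N + 1) * H z :=
    Filter.EventuallyEq.deriv hev
  filter_upwards [hd, hH.eventually_analyticAt] with z hz hz'
  rw [hz]
  have h1 : HasDerivAt (fun z => (z - c) ^ (N + 1) * H z)
      ((N + 1 : ℂ) * (z - c) ^ N * H z + (z - c) ^ (N + 1) * _root_.deriv H z) z := by
    have hb : HasDerivAt (fun z : ℂ => (z - c) ^ (N + 1))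
        ((N + 1 : ℂ) * (z - c) ^ N) z := by
      have := ((hasDerivAt_id z).sub_const c).pow (N + 1)
      simpa [Pi.pow_def] using this
    have := hb.mul hz'.differentiableAt.hasDerivAt
    exact this
  rw [h1.deriv]; ring

lemma one_mem_slit : (1 : ℂ) ∈ Complex.slitPlane := by
  simp [Complex.mem_slitPlane_iff]

lemma powz {ι : Type*} [DecidableEq ι] (lam : ι → ℂ) (S : Finset ι) :
    ∀ c : ι → ℂ, Set.InjOn lam S →
      VOrd (fun v => ∑ i ∈ S, c i * pw (lam i) v) 1 S.card →
      ∀ i ∈ S, c i = 0 := by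
  induction S using Finset.induction_on with
  | empty => intro c _ _ i hi; exact absurd hi (Finset.notMem_empty i)
  | insert _ _ hni ih =>
    rename_i i₀ S'
    intro c hinj h i hi
    have hcard : (insert i₀ S').card = S'.card + 1 := Finset.card_insert_of_notMem hni
    rw [hcard] at h
    -- step 1: multiply by pw (-lam i₀)
    have h1 : VOrd (fun v => ∑ j ∈ insert i₀ S', c j * pw (lam j - lam i₀) v) 1
        (S'.card + 1) := by
      have := h.mul_analytic (pw_analyticAt one_mem_slit (-lam i₀))
      refine this.congr (Filter.Eventually.of_forall fun v => ?_)
      dsimp only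
      rw [Finset.mul_sum]
      refine Finset.sum_congr rfl fun j _ => ?_
      rw [show pw (-lam i₀) v * (c j * pw (lam j) v) = c j * (pw (lam j) v * pw (-lam i₀) v)
        by ring, pw_mul]
      ring_nf
    -- step 2: differentiate
    have h2 := h1.derivOrd
    have h3 : VOrd (fun v => ∑ j ∈ insert i₀ S',
        c j * ((lam j - lam i₀) * pw (lam j - lam i₀ - 1) v)) 1 S'.card := by
      refine h2.congr ?_
      filter_upwards [Complex.isOpen_slitPlane.eventually_mem one_mem_slit] with v hv
      have : HasDerivAt (fun v => ∑ j ∈ insert i₀ S', c j * pw (lam j - lam i₀) v)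
          (∑ j ∈ insert i₀ S', c j * ((lam j - lam i₀) * pw (lam j - lam i₀ - 1) v)) v :=
        HasDerivAt.fun_sum fun j _ => (pw_hasDerivAt hv (lam j - lam i₀)).const_mul (c j)
      exact this.deriv
    -- step 3: multiply by pw (lam i₀ + 1)
    have h4 : VOrd (fun v => ∑ j ∈ S', (c j * (lam j - lam i₀)) * pw (lam j) v) 1
        S'.card := by
      have := h3.mul_analytic (pw_analyticAt one_mem_slit (lam i₀ + 1))
      refine this.congr (Filter.Eventually.of_forall fun v => ?_)
      dsimp only
      rw [Finset.mul_sum, Finset.sum_insert hni]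
      have : pw (lam i₀ + 1) v * (c i₀ * ((lam i₀ - lam i₀) * pw (lam i₀ - lam i₀ - 1) v))
          = 0 := by ring_nf
      rw [this, zero_add]
      refine Finset.sum_congr rfl fun j _ => ?_
      rw [show pw (lam i₀ + 1) v * (c j * ((lam j - lam i₀) * pw (lam j - lam i₀ - 1) v))
        = (c j * (lam j - lam i₀)) * (pw (lam i₀ + 1) v * pw (lam j - lam i₀ - 1) v) by ring,
        pw_mul]
      ring_nf
    have hinj' : Set.InjOn lam S' := hinj.mono (by
      intro x hx; exact Finset.mem_insert_of_mem hx)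
    have hS0 : ∀ j ∈ S', c j = 0 := by
      intro j hj
      have hz := ih (fun j => c j * (lam j - lam i₀)) hinj' h4 j hj
      have hne : lam j - lam i₀ ≠ 0 := by
        intro hzero
        have : lam j = lam i₀ := by linear_combination hzero
        have : j = i₀ := hinj (Finset.mem_insert_of_mem hj)
          (Finset.mem_insert_self i₀ S') this
        exact hni (this ▸ hj)
      exact (mul_eq_zero.mp hz).resolve_right hne
    rcases Finset.mem_insert.mp hi with rfl | hiS
    · -- i = i₀ : use value at 1
      have hzero := h.eval_zero
      simp only [Finset.sum_insert hni, pw_one, mul_one] at hzero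
      have hs : ∑ x ∈ S', c x = 0 := Finset.sum_eq_zero hS0
      rw [hs, add_zero] at hzero
      exact hzero
    · exact hS0 i hiS

lemma grading {N : ℕ} : ∀ (D : ℕ) (ψ : ℕ → ℂ → ℂ),
    (∀ s : ℝ, 0 < s → VOrd (fun v => ∑ n ∈ Finset.range D, (s : ℂ) ^ n * ψ n v) 1 N) →
    ∀ n < D, VOrd (ψ n) 1 N := by
  intro D
  induction D with
  | zero => intro ψ _ n hn; omega
  | succ D ih =>
    intro ψ h n hn
    have hlow : ∀ k < D, VOrd (ψ k) 1 N := by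
      have h' : ∀ s : ℝ, 0 < s → VOrd (fun v => ∑ n ∈ Finset.range D,
          (s : ℂ) ^ n * ((((2:ℂ) ^ n - 2 ^ D)) * ψ n v)) 1 N := by
        intro s hs
        have hA := h (2 * s) (by positivity)
        have hB := (h s hs).const_mul ((2:ℂ) ^ D)
        have := hA.sub hB
        refine this.congr (Filter.Eventually.of_forall fun v => ?_)
        dsimp only
        rw [Finset.mul_sum, ← Finset.sum_sub_distrib, Finset.sum_range_succ]
        have htop : (↑(2*s):ℂ) ^ D * ψ D v - (2:ℂ) ^ D * ((s:ℂ) ^ D * ψ D v) = 0 := by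
          push_cast; rw [mul_pow]; ring
        rw [htop, add_zero]
        refine Finset.sum_congr rfl fun k _ => ?_
        push_cast
        rw [mul_pow]; ring
      intro k hk
      have := ih (fun n v => ((2:ℂ) ^ n - 2 ^ D) * ψ n v) h' k hk
      have hne : ((2:ℂ) ^ k - 2 ^ D) ≠ 0 := by
        have : ((2:ℕ) ^ k : ℂ) ≠ ((2:ℕ) ^ D : ℂ) := by
          exact_mod_cast Nat.ne_of_lt (Nat.pow_lt_pow_right (by norm_num) hk)
        push_cast at this
        exact sub_ne_zero.mpr this
      have := this.const_mul ((2:ℂ) ^ k - 2 ^ D)⁻¹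
      refine this.congr (Filter.Eventually.of_forall fun v => ?_)
      dsimp only
      field_simp
    rcases Nat.lt_or_ge n D with hnD | hnD
    · exact hlow n hnD
    · have hnD' : n = D := by omega
      subst hnD'
      have h1 := h 1 one_pos
      have hsum : VOrd (fun v => ∑ k ∈ Finset.range n, (1:ℂ) ^ k * ψ k v) 1 N :=
        VOrd.sum fun k hk => ((hlow k (Finset.mem_range.mp hk)).const_mul ((1:ℂ)^k))
      have := h1.sub hsum
      refine this.congr (Filter.Eventually.of_forall fun v => ?_)
      dsimp only
      rw [Finset.sum_range_succ]
      push_cast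
      simp

lemma eval_aeval_gen (F : MvPolynomial (Fin 2) ℂ) (g : Fin 2 → MvPolynomial (Fin 2) ℂ)
    (v : Fin 2 → ℂ) :
    MvPolynomial.eval v (MvPolynomial.aeval g F)
      = MvPolynomial.eval (fun i => MvPolynomial.eval v (g i)) F := by
  rw [MvPolynomial.aeval_def, MvPolynomial.eval₂_comp_left (MvPolynomial.eval v)]
  have h1 : (MvPolynomial.eval v).comp (algebraMap ℂ (MvPolynomial (Fin 2) ℂ))
      = RingHom.id ℂ := by
    ext r; simp
  rw [h1]
  rfl

lemma eval_aeval_poly (F : MvPolynomial (Fin 2) ℂ) (x : ℂ) :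
    Polynomial.eval x (MvPolynomial.aeval (fun _ : Fin 2 => (Polynomial.X : Polynomial ℂ)) F)
      = MvPolynomial.eval ![x, x] F := by
  rw [MvPolynomial.aeval_def,
    show Polynomial.eval x (MvPolynomial.eval₂ (algebraMap ℂ (Polynomial ℂ))
        (fun _ => Polynomial.X) F)
      = (Polynomial.evalRingHom x) (MvPolynomial.eval₂ (algebraMap ℂ (Polynomial ℂ))
        (fun _ => Polynomial.X) F) from rfl,
    MvPolynomial.eval₂_comp_left (Polynomial.evalRingHom x)]
  have h1 : (Polynomial.evalRingHom x).comp (algebraMap ℂ (Polynomial ℂ))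
      = RingHom.id ℂ := by
    ext r; simp
  have h2 : ![x, x] = fun _ : Fin 2 => x := by
    funext i; fin_cases i <;> rfl
  have h3 : (⇑(Polynomial.evalRingHom x) ∘ fun _ : Fin 2 => (Polynomial.X : Polynomial ℂ))
      = fun _ : Fin 2 => x := by funext i; simp
  rw [h1, h3, h2]
  rfl

lemma exists_repr (a : ℂ) (F : MvPolynomial (Fin 2) ℂ) :
    ∃ (d : ℕ) (C : ℕ × ℕ → ℂ),
      ∀ x y : ℂ, MvPolynomial.eval ![x, y] F =
        ∑ pq ∈ Finset.range (d+1) ×ˢ Finset.range (d+1),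
          C pq * (x - a) ^ pq.1 * (y - a) ^ pq.2 := by
  classical
  set Fsh : MvPolynomial (Fin 2) ℂ :=
    MvPolynomial.aeval (fun i => MvPolynomial.X i + MvPolynomial.C a) F with hFsh
  set d := Fsh.totalDegree with hd
  set emb : ℕ × ℕ → (Fin 2 →₀ ℕ) :=
    fun pq => Finsupp.single 0 pq.1 + Finsupp.single 1 pq.2 with hemb
  have hemb0 : ∀ pq, emb pq 0 = pq.1 := by
    intro pq; simp [hemb, Finsupp.single_apply]
  have hemb1 : ∀ pq, emb pq 1 = pq.2 := by
    intro pq; simp [hemb, Finsupp.single_apply]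
  have hembinj : Function.Injective emb := by
    intro pq pq' h
    have h0 := congrArg (fun t => t 0) h
    have h1 := congrArg (fun t => t 1) h
    simp only [hemb0, hemb1] at h0 h1
    exact Prod.ext h0 h1
  refine ⟨d, fun pq => Fsh.coeff (emb pq), fun x y => ?_⟩
  -- shift
  have hshift : MvPolynomial.eval ![x, y] F = MvPolynomial.eval ![x - a, y - a] Fsh := by
    rw [hFsh, eval_aeval_gen]
    have : (fun i => MvPolynomial.eval ![x - a, y - a]
        (MvPolynomial.X i + MvPolynomial.C a)) = ![x, y] := by
      funext i; fin_cases i <;> simp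
    rw [this]
  rw [hshift, MvPolynomial.eval_eq']
  -- support sum to grid sum
  have hsub : Fsh.support ⊆ (Finset.range (d+1) ×ˢ Finset.range (d+1)).image emb := by
    intro t ht
    have hsum : t 0 + t 1 = t.sum fun _ e => e := by
      rw [Finsupp.sum_fintype]
      · exact (Fin.sum_univ_two _).symm
      · intro i; rfl
    have hle : t.sum (fun _ e => e) ≤ d := MvPolynomial.le_totalDegree ht
    have h0 : t 0 ≤ d := by omega
    have h1 : t 1 ≤ d := by omega
    refine Finset.mem_image.mpr ⟨(t 0, t 1), ?_, ?_⟩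
    · simp [Finset.mem_product, Nat.lt_succ_iff, h0, h1]
    · ext i
      fin_cases i
      · simp [hemb0]
      · simp [hemb1]
  have hgrid : ∑ t ∈ Fsh.support, Fsh.coeff t * ∏ i, (![x - a, y - a]) i ^ t i
      = ∑ t ∈ (Finset.range (d+1) ×ˢ Finset.range (d+1)).image emb,
          Fsh.coeff t * ∏ i, (![x - a, y - a]) i ^ t i := by
    refine Finset.sum_subset hsub fun t _ htn => ?_
    rw [MvPolynomial.notMem_support_iff.mp htn, zero_mul]
  rw [hgrid, Finset.sum_image (fun p _ q _ h => hembinj h)]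
  refine Finset.sum_congr rfl fun pq _ => ?_
  rw [Fin.prod_univ_two]
  simp [hemb0, hemb1, mul_assoc]

end StmtAux

/-- let `a ∈ ℂ`, let `b ∈ ℂ` be a non-integer, let `U` be the plane slit
along `a + ℝ_{≤0}`, and let `f` be the principal branch of `(x − a)^b`. If `F ∈ Q_m(f)`
with respect to `U`, then `(x − a)^m` divides `F(x,x)` in `ℂ[x]`. -/
theorem stmt12 (a b : ℂ) (hb : ∀ n : ℤ, b ≠ (n : ℂ)) (m : ℕ)
    (F : MvPolynomial (Fin 2) ℂ)
    (hF : MemQ {x : ℂ | x - a ∈ Complex.slitPlane}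
      (fun x => Complex.exp (b * Complex.log (x - a))) m F) :
    (Polynomial.X - Polynomial.C a) ^ m
      ∣ MvPolynomial.aeval (fun _ : Fin 2 => (Polynomial.X : Polynomial ℂ)) F := by
  classical
  obtain ⟨d, C, hrepr⟩ := exists_repr a F
  obtain ⟨h, hdiff, heq⟩ := hF
  set U : Set ℂ := {x : ℂ | x - a ∈ Complex.slitPlane} with hUdef
  have hU_open : IsOpen U := by
    have : U = (fun x => x - a) ⁻¹' Complex.slitPlane := rfl
    rw [this]
    exact Complex.isOpen_slitPlane.preimage (continuous_id.sub continuous_const)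
  set grid := Finset.range (d+1) ×ˢ Finset.range (d+1) with hgriddef
  set ψ : ℕ → ℂ → ℂ := fun n v => ∑ pq ∈ grid.filter (fun pq => pq.1 + pq.2 = n),
      C pq * (pw (pq.2 : ℂ) v - pw (b + pq.1) v) with hψdef
  have key : ∀ s : ℝ, 0 < s →
      VOrd (fun v => ∑ n ∈ Finset.range (2*d+1), (s:ℂ)^n * ψ n v) 1 (2*m+1) := by
    intro s hs
    have hsslit : (s:ℂ) ∈ Complex.slitPlane := by
      rw [Complex.mem_slitPlane_iff]; left; simpa using hs
    have hxU : (a + (s:ℂ)) ∈ U := by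
      show a + (s:ℂ) - a ∈ Complex.slitPlane
      simpa using hsslit
    set E : ℂ := Complex.exp (b * Complex.log (s:ℂ)) with hEdef
    have hEne : E ≠ 0 := Complex.exp_ne_zero _
    set W : Set ℂ := {v : ℂ | a + (s:ℂ) * v ∈ U} with hWdef
    have hWopen : IsOpen W :=
      hU_open.preimage (continuous_const.add (continuous_const.mul continuous_id))
    have hW1 : (1:ℂ) ∈ W := by
      show a + (s:ℂ) * 1 ∈ U
      rw [mul_one]; exact hxU
    have hhan : AnalyticAt ℂ (fun v => h (a + (s:ℂ), a + (s:ℂ) * v)) 1 := by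
      have hinner : DifferentiableOn ℂ (fun v : ℂ => ((a + (s:ℂ) : ℂ), a + (s:ℂ) * v)) W :=
        ((differentiable_const _).prodMk
          ((differentiable_const _).add ((differentiable_const _).mul differentiable_id))).differentiableOn
      have hdOn : DifferentiableOn ℂ (fun v => h (a + (s:ℂ), a + (s:ℂ) * v)) W :=
        hdiff.comp hinner (fun v hv => ⟨hxU, hv⟩)
      exact hdOn.analyticAt (hWopen.mem_nhds hW1)
    refine ⟨fun v => E⁻¹ * ((-(s:ℂ))^(2*m+1) * h (a + (s:ℂ), a + (s:ℂ) * v)),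
      analyticAt_const.mul (analyticAt_const.mul hhan), ?_⟩
    filter_upwards [hWopen.eventually_mem hW1,
      Complex.isOpen_slitPlane.eventually_mem one_mem_slit] with v hvW hvS
    have hv0 : v ≠ 0 := Complex.slitPlane_ne_zero hvS
    refine mul_left_cancel₀ hEne ?_
    have hfx : Complex.exp (b * Complex.log ((a + (s:ℂ)) - a)) = E := by
      rw [add_sub_cancel_left]
    have hfy : Complex.exp (b * Complex.log ((a + (s:ℂ)*v) - a)) = E * pw b v := by
      have h1 : (a + (s:ℂ)*v) - a = (s:ℂ) * v := by ring
      rw [h1, Complex.log_ofReal_mul hs hv0, Complex.ofReal_log hs.le, hEdef, pw,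
        mul_add, Complex.exp_add]
    have hrx : MvPolynomial.eval ![a + (s:ℂ), a + (s:ℂ)*v] F
        = ∑ pq ∈ grid, C pq * (s:ℂ)^pq.1 * ((s:ℂ)*v)^pq.2 := by
      rw [hrepr]
      simp only [add_sub_cancel_left]
    have hry : MvPolynomial.eval ![a + (s:ℂ)*v, a + (s:ℂ)] F
        = ∑ pq ∈ grid, C pq * ((s:ℂ)*v)^pq.1 * (s:ℂ)^pq.2 := by
      rw [hrepr]
      simp only [add_sub_cancel_left]
    have hgrade : (∑ n ∈ Finset.range (2*d+1), (s:ℂ)^n * ψ n v)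
        = ∑ pq ∈ grid, (s:ℂ)^(pq.1+pq.2) * (C pq * (pw (pq.2 : ℂ) v - pw (b + pq.1) v)) := by
      rw [← Finset.sum_fiberwise_of_maps_to (g := fun pq : ℕ × ℕ => pq.1 + pq.2)
        (t := Finset.range (2*d+1)) ?_ (fun pq => (s:ℂ)^(pq.1+pq.2) * (C pq * (pw (pq.2 : ℂ) v - pw (b + pq.1) v)))]
      · refine Finset.sum_congr rfl fun n _ => ?_
        rw [hψdef, Finset.mul_sum]
        refine Finset.sum_congr rfl fun pq hpq => ?_
        have : pq.1 + pq.2 = n := (Finset.mem_filter.mp hpq).2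
        rw [this]
      · intro pq hpq
        rw [hgriddef] at hpq
        have := Finset.mem_product.mp hpq
        simp only [Finset.mem_range] at this ⊢
        omega
    have hEL : E * (∑ n ∈ Finset.range (2*d+1), (s:ℂ)^n * ψ n v)
        = Complex.exp (b * Complex.log ((a + (s:ℂ)) - a))
            * MvPolynomial.eval ![a + (s:ℂ), a + (s:ℂ)*v] F
          - Complex.exp (b * Complex.log ((a + (s:ℂ)*v) - a))
            * MvPolynomial.eval ![a + (s:ℂ)*v, a + (s:ℂ)] F := by
      rw [hfx, hfy, hrx, hry, hgrade, Finset.mul_sum, Finset.mul_sum, Finset.mul_sum,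
        ← Finset.sum_sub_distrib]
      refine Finset.sum_congr rfl fun pq _ => ?_
      rw [pw_nat hv0 pq.2, ← pw_mul, pw_nat hv0 pq.1]
      ring
    have hfac : ((a + (s:ℂ)) - (a + (s:ℂ)*v)) = (-(s:ℂ)) * (v - 1) := by ring
    calc E * (∑ n ∈ Finset.range (2*d+1), (s:ℂ)^n * ψ n v)
        = Complex.exp (b * Complex.log ((a + (s:ℂ)) - a))
            * MvPolynomial.eval ![a + (s:ℂ), a + (s:ℂ)*v] F
          - Complex.exp (b * Complex.log ((a + (s:ℂ)*v) - a))
            * MvPolynomial.eval ![a + (s:ℂ)*v, a + (s:ℂ)] F := hEL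
      _ = ((a + (s:ℂ)) - (a + (s:ℂ)*v)) ^ (2*m+1) * h (a + (s:ℂ), a + (s:ℂ)*v) :=
          heq (a + (s:ℂ)) hxU (a + (s:ℂ)*v) hvW
      _ = E * ((v - 1) ^ (2*m+1) * (E⁻¹ * ((-(s:ℂ))^(2*m+1) * h (a + (s:ℂ), a + (s:ℂ)*v)))) := by
          rw [hfac, mul_pow]
          field_simp
  have hψV : ∀ n < 2*d+1, VOrd (ψ n) 1 (2*m+1) := grading _ _ key
  have hC0 : ∀ pq ∈ grid, pq.1 + pq.2 < m → C pq = 0 := by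
    intro pq₀ hpq₀ hlt
    set n := pq₀.1 + pq₀.2 with hn
    have hmemrange : ∀ pq ∈ grid, pq.1 < d + 1 ∧ pq.2 < d + 1 := by
      intro pq hpq
      rw [hgriddef] at hpq
      have := Finset.mem_product.mp hpq
      simp only [Finset.mem_range] at this
      exact this
    have hnlt : n < 2*d+1 := by
      have := hmemrange pq₀ hpq₀
      omega
    have hV : VOrd (ψ n) 1 (2*m+1) := hψV n hnlt
    set S : Finset (Bool × ℕ × ℕ) :=
      ({false, true} : Finset Bool) ×ˢ (grid.filter fun pq => pq.1 + pq.2 = n) with hSdef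
    set lam : Bool × ℕ × ℕ → ℂ := fun i => if i.1 then b + i.2.1 else (i.2.2 : ℂ) with hlamdef
    set coefc : Bool × ℕ × ℕ → ℂ := fun i => if i.1 then -C i.2 else C i.2 with hcoefdef
    have hψeq : ψ n = fun v => ∑ i ∈ S, coefc i * pw (lam i) v := by
      funext v
      rw [hSdef, Finset.sum_product, Finset.sum_pair (by simp : (false : Bool) ≠ true)]
      simp only [hlamdef, hcoefdef, if_true, if_false, Bool.false_eq_true, ite_false, ite_true]
      rw [← Finset.sum_add_distrib]
      refine Finset.sum_congr rfl fun pq _ => ?_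
      ring
    have hinj : Set.InjOn lam S := by
      rintro ⟨e₁, p₁, q₁⟩ h₁ ⟨e₂, p₂, q₂⟩ h₂ hl
      have h₁' := Finset.mem_product.mp (Finset.mem_coe.mp h₁)
      have h₂' := Finset.mem_product.mp (Finset.mem_coe.mp h₂)
      have hf₁ := (Finset.mem_filter.mp h₁'.2).2
      have hf₂ := (Finset.mem_filter.mp h₂'.2).2
      simp only at hf₁ hf₂
      cases e₁ <;> cases e₂ <;>
        simp only [hlamdef, if_true, if_false, Bool.false_eq_true, ite_false, ite_true] at hl
      · have : q₁ = q₂ := by exact_mod_cast hl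
        have : p₁ = p₂ := by omega
        simp_all
      · exact absurd (by push_cast; linear_combination -hl : b = (((q₁ : ℤ) - (p₂ : ℤ) : ℤ) : ℂ))
          (hb _)
      · exact absurd (by push_cast; linear_combination hl : b = (((q₂ : ℤ) - (p₁ : ℤ) : ℤ) : ℂ))
          (hb _)
      · have : p₁ = p₂ := by
          have : (p₁ : ℂ) = p₂ := by linear_combination hl
          exact_mod_cast this
        have : q₁ = q₂ := by omega
        simp_all
    have hcardfilter : (grid.filter fun pq => pq.1 + pq.2 = n).card ≤ n + 1 := by
      have : (grid.filter fun pq => pq.1 + pq.2 = n).card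
          ≤ (Finset.range (n+1)).card := by
        refine Finset.card_le_card_of_injOn (fun pq => pq.1) ?_ ?_
        · intro pq hpq
          have := (Finset.mem_filter.mp hpq).2
          simp only [Finset.mem_coe, Finset.mem_range]
          omega
        · rintro ⟨p₁, q₁⟩ hpq₁ ⟨p₂, q₂⟩ hpq₂ hpp
          have h1 := (Finset.mem_filter.mp (Finset.mem_coe.mp hpq₁)).2
          have h2 := (Finset.mem_filter.mp (Finset.mem_coe.mp hpq₂)).2
          simp only at h1 h2 hpp
          simp_all
          omega
      simpa using this
    have hScard : S.card ≤ 2*m+1 := by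
      rw [hSdef, Finset.card_product]
      have h2 : ({false, true} : Finset Bool).card = 2 := by decide
      rw [h2]
      omega
    rw [hψeq] at hV
    have hall := powz lam S coefc hinj (hV.mono hScard)
    have hmem : (false, pq₀) ∈ S := by
      rw [hSdef, Finset.mem_product]
      constructor
      · simp
      · rw [Finset.mem_filter]
        exact ⟨hpq₀, rfl⟩
    simpa [hcoefdef] using hall _ hmem
  -- conclude
  have hPQ : MvPolynomial.aeval (fun _ : Fin 2 => (Polynomial.X : Polynomial ℂ)) F
      = ∑ pq ∈ grid, Polynomial.C (C pq) * (Polynomial.X - Polynomial.C a)^(pq.1+pq.2) := by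
    refine Polynomial.funext fun x => ?_
    rw [eval_aeval_poly, hrepr x x, Polynomial.eval_finset_sum]
    refine Finset.sum_congr rfl fun pq _ => ?_
    simp only [Polynomial.eval_mul, Polynomial.eval_pow, Polynomial.eval_sub,
      Polynomial.eval_C, Polynomial.eval_X]
    rw [pow_add]; ring
  rw [hPQ]
  refine Finset.dvd_sum fun pq hpq => ?_
  by_cases hlt : pq.1 + pq.2 < m
  · rw [hC0 pq hpq hlt]
    simp
  · exact Dvd.dvd.mul_left (pow_dvd_pow _ (le_of_not_gt hlt)) _
end
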